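/- arXiv:1401.5967 — 6 statements merged into one kernel-verified Lean document; each statement's English description precedes it below -/
import Mathlib

section
/- There exists a constant C₂ > 0, depending only on N and s, such that for every δ, ε ∈ (0,1/20], every z ∈ B₁, and every admissible cutoff φ_δ, one has ∫_{ℝ^N} |u_{δ,ε,z}|^{2N/(N−2s)} dx ≥ ∫_{ℝ^N} |U_{ε,z}|^{2N/(N−2s)} dx − C₂((δ/ε)^N + ε^N). -/
open MeasureTheory Filter Set

noncomputable section

/-- `ℝ^N` with the Euclidean norm. -/
abbrev Rn (N : ℕ) : Type := EuclideanSpace ℝ (Fin N)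

/-- The Gagliardo inner product
`⟨u,v⟩ = ∬ (u(x)-u(y))(v(x)-v(y))/|x-y|^{N+2s} dx dy`. -/
noncomputable def gagInner (N : ℕ) (s : ℝ) (u v : Rn N → ℝ) : ℝ :=
  ∫ p : Rn N × Rn N,
    (u p.1 - u p.2) * (v p.1 - v p.2) / ‖p.1 - p.2‖ ^ ((N : ℝ) + 2 * s)

/-- The squared Gagliardo seminorm `‖u‖² = ⟨u,u⟩`. -/
noncomputable def gagNormSq (N : ℕ) (s : ℝ) (u : Rn N → ℝ) : ℝ :=
  gagInner N s u u

/-- The Gagliardo seminorm `‖u‖`. -/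
noncomputable def gagNorm (N : ℕ) (s : ℝ) (u : Rn N → ℝ) : ℝ :=
  Real.sqrt (gagNormSq N s u)

/-- Membership in `Ḣ^s(ℝ^N)`: `u ∈ L^{2N/(N-2s)}` and the Gagliardo seminorm is finite. -/
def MemHs (N : ℕ) (s : ℝ) (u : Rn N → ℝ) : Prop :=
  MemLp u (ENNReal.ofReal (2 * N / (N - 2 * s))) volume ∧
  Integrable (fun p : Rn N × Rn N =>
    (u p.1 - u p.2) ^ 2 / ‖p.1 - p.2‖ ^ ((N : ℝ) + 2 * s)) volume

/-- Membership in `X₀`: `u ∈ Ḣ^s(ℝ^N)` and `u = 0` a.e. in `ℝ^N ∖ Ω`. -/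
def MemX0 (N : ℕ) (s : ℝ) (Ω : Set (Rn N)) (u : Rn N → ℝ) : Prop :=
  MemHs N s u ∧ ∀ᵐ x : Rn N, x ∉ Ω → u x = 0

/-- The Talenti-type bubble `U_{ε,z}(x) = (ε/(ε² + |x-z|²))^{(N-2s)/2}`. -/
noncomputable def bubble (N : ℕ) (s : ℝ) (ε : ℝ) (z x : Rn N) : ℝ :=
  (ε / (ε ^ 2 + ‖x - z‖ ^ 2)) ^ (((N : ℝ) - 2 * s) / 2)

/-- An admissible cutoff `φ_δ`. -/
structure IsCutoff (N : ℕ) (δ : ℝ) (φ : Rn N → ℝ) : Prop where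
  smooth : ContDiff ℝ (⊤ : ℕ∞) φ
  radial : ∀ x y : Rn N, ‖x‖ = ‖y‖ → φ x = φ y
  mem01 : ∀ x, φ x ∈ Set.Icc (0 : ℝ) 1
  eq_zero_inner : ∀ x, ‖x‖ ≤ 2 * δ → φ x = 0
  eq_zero_outer : ∀ x, 4 ≤ ‖x‖ → φ x = 0
  eq_one_mid : ∀ x, 4 * δ ≤ ‖x‖ → ‖x‖ ≤ 3 → φ x = 1
  grad_le_inner : ∀ x, ‖x‖ ≤ 4 * δ → ‖fderiv ℝ φ x‖ ≤ 1 / δ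
  grad_le_outer : ∀ x, 3 ≤ ‖x‖ → ‖fderiv ℝ φ x‖ ≤ 2

/-- The best Sobolev constant
`S = inf ‖u‖²/(∫ |u|^{2N/(N-2s)})^{(N-2s)/N}` over `u ∈ Ḣ^s(ℝ^N) ∖ {0}`. -/
noncomputable def Sconst (N : ℕ) (s : ℝ) : ℝ :=
  sInf { r : ℝ | ∃ u : Rn N → ℝ, MemHs N s u ∧ ¬ u =ᵐ[volume] (fun _ => (0 : ℝ)) ∧
    r = gagNormSq N s u /
      (∫ x : Rn N, |u x| ^ (2 * (N : ℝ) / ((N : ℝ) - 2 * s))) ^ (((N : ℝ) - 2 * s) / (N : ℝ)) }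

/-- The Rayleigh quotient restricted to `X₀`:
`R₀(u) = ‖u‖²/(∫_Ω |u|^{2N/(N-2s)})^{(N-2s)/N}`. -/
noncomputable def R0 (N : ℕ) (s : ℝ) (Ω : Set (Rn N)) (u : Rn N → ℝ) : ℝ :=
  gagNormSq N s u /
    (∫ x in Ω, |u x| ^ (2 * (N : ℝ) / ((N : ℝ) - 2 * s))) ^ (((N : ℝ) - 2 * s) / (N : ℝ))

/-- The energy functional
`I₀(u) = ½‖u‖² − ((N−2s)/(2N)) ∫_Ω |u|^{2N/(N-2s)}`. -/
noncomputable def I0 (N : ℕ) (s : ℝ) (Ω : Set (Rn N)) (u : Rn N → ℝ) : ℝ :=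
  (1 / 2) * gagNormSq N s u -
    (((N : ℝ) - 2 * s) / (2 * (N : ℝ))) *
      ∫ x in Ω, |u x| ^ (2 * (N : ℝ) / ((N : ℝ) - 2 * s))

/-- The derivative of `R₀` on the manifold `M`:
`R₀'(v)(φ) = 2⟨v,φ⟩ − 2‖v‖² ∫_Ω |v|^{4s/(N-2s)} v φ`. -/
noncomputable def R0deriv (N : ℕ) (s : ℝ) (Ω : Set (Rn N)) (v φ : Rn N → ℝ) : ℝ :=
  2 * gagInner N s v φ -
    2 * gagNormSq N s v * ∫ x in Ω, |v x| ^ (4 * s / ((N : ℝ) - 2 * s)) * v x * φ x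

/-- The derivative of `I₀`:
`I₀'(u)(φ) = ⟨u,φ⟩ − ∫_Ω |u|^{4s/(N-2s)} u φ`. -/
noncomputable def I0deriv (N : ℕ) (s : ℝ) (Ω : Set (Rn N)) (u φ : Rn N → ℝ) : ℝ :=
  gagInner N s u φ -
    ∫ x in Ω, |u x| ^ (4 * s / ((N : ℝ) - 2 * s)) * u x * φ x

/-- The dual norm `sup {|T(φ)| : φ ∈ X₀, ‖φ‖ ≤ 1}` of a functional `T` on `X₀`. -/
noncomputable def dualSup (N : ℕ) (s : ℝ) (Ω : Set (Rn N)) (T : (Rn N → ℝ) → ℝ) : ℝ :=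
  sSup { r : ℝ | ∃ φ : Rn N → ℝ, MemX0 N s Ω φ ∧ gagNorm N s φ ≤ 1 ∧ r = |T φ| }

end

set_option maxHeartbeats 1000000 in
/-- the lower bound on the critical Lebesgue norm of the truncated
bubble, `z ∈ B₁`. -/
theorem stmt3 (N : ℕ) (s : ℝ) (hN : 2 ≤ N) (hs0 : 0 < s) (hs1 : s < 1)
    (hNs : 2 * s < N) :
    ∃ C₂ : ℝ, 0 < C₂ ∧
      ∀ δ ε : ℝ, δ ∈ Set.Ioc (0 : ℝ) (1 / 20) → ε ∈ Set.Ioc (0 : ℝ) (1 / 20) →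
        ∀ z : Rn N, ‖z‖ ≤ 1 →
          ∀ φ : Rn N → ℝ, IsCutoff N δ φ →
            (∫ x : Rn N, |bubble N s ε z x| ^ (2 * (N : ℝ) / ((N : ℝ) - 2 * s))) -
                C₂ * ((δ / ε) ^ N + ε ^ N) ≤
              ∫ x : Rn N, |φ x * bubble N s ε z x| ^ (2 * (N : ℝ) / ((N : ℝ) - 2 * s)) := by
  classical
  have hN0 : (0:ℝ) < (N:ℝ) := by exact_mod_cast (by omega : 0 < N)
  have hNs' : (0:ℝ) < (N:ℝ) - 2 * s := by linarith
  have hfr : (Module.finrank ℝ (Rn N) : ℝ) = (N : ℝ) := by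
    rw [finrank_euclideanSpace_fin]
  have hJint : Integrable (fun x : Rn N => (1 + ‖x‖) ^ (-(2 * (N:ℝ)))) volume := by
    apply integrable_one_add_norm
    rw [hfr]; linarith
  set CJ : ℝ := ∫ x : Rn N, (1 + ‖x‖) ^ (-(2 * (N:ℝ))) with hCJ
  have hCJ0 : 0 ≤ CJ := by
    apply integral_nonneg
    intro x
    exact Real.rpow_nonneg (by positivity) _
  set volB : ℝ := (volume (Metric.ball (0 : Rn N) 1)).toReal with hvolB
  have hvolB0 : 0 < volB := by
    apply ENNReal.toReal_pos
    · exact (Metric.measure_ball_pos volume 0 one_pos).ne'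
    · exact measure_ball_lt_top.ne
  refine ⟨4 ^ N * volB + 4 ^ N * CJ, by positivity, ?_⟩
  rintro δ ε ⟨hδ0, hδ1⟩ ⟨hε0, hε1⟩ z hz φ hφ
  haveI : Nonempty (Fin N) := ⟨⟨0, by omega⟩⟩
  haveI : Nontrivial (Rn N) := by
    refine nontrivial_of_ne 0 (EuclideanSpace.single (⟨0, by omega⟩ : Fin N) 1) ?_
    intro h
    have := congrFun (congrArg (fun f : Rn N => (f : Fin N → ℝ)) h) ⟨0, by omega⟩
    simp [EuclideanSpace.single] at this
  set p : ℝ := 2 * (N:ℝ) / ((N:ℝ) - 2 * s) with hp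
  have hp0 : 0 ≤ p := by positivity
  set g : Rn N → ℝ := fun x => (ε / (ε ^ 2 + ‖x - z‖ ^ 2)) ^ N with hg
  have hbase : ∀ x : Rn N, 0 < ε / (ε ^ 2 + ‖x - z‖ ^ 2) := by
    intro x; positivity
  have key : ∀ x : Rn N, |bubble N s ε z x| ^ p = g x := by
    intro x
    have hb := hbase x
    have hbub0 : 0 ≤ bubble N s ε z x := Real.rpow_nonneg hb.le _
    have hap : ((N:ℝ) - 2 * s) / 2 * p = (N:ℝ) := by
      rw [hp]; field_simp
    rw [abs_of_nonneg hbub0]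
    show ((ε / (ε ^ 2 + ‖x - z‖ ^ 2)) ^ (((N:ℝ) - 2 * s) / 2)) ^ p = g x
    rw [← Real.rpow_mul hb.le, hap, Real.rpow_natCast]
  have hgnn : ∀ x, 0 ≤ g x := fun x => pow_nonneg (hbase x).le N
  have key2 : ∀ x : Rn N, |φ x * bubble N s ε z x| ^ p ≤ g x := by
    intro x
    have h1 : |φ x * bubble N s ε z x| ≤ |bubble N s ε z x| := by
      rw [abs_mul]
      have hφx := hφ.mem01 x
      have : |φ x| ≤ 1 := abs_le.mpr ⟨by linarith [hφx.1], hφx.2⟩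
      nlinarith [abs_nonneg (bubble N s ε z x)]
    calc |φ x * bubble N s ε z x| ^ p ≤ |bubble N s ε z x| ^ p :=
          Real.rpow_le_rpow (abs_nonneg _) h1 hp0
      _ = g x := key x
  -- continuity facts
  have hbubcont : Continuous (bubble N s ε z) := by
    apply Continuous.rpow_const
    · exact continuous_const.div
        (continuous_const.add ((continuous_id.sub continuous_const).norm.pow 2))
        (fun x => (by positivity : (0:ℝ) < ε ^ 2 + ‖x - z‖ ^ 2).ne')
    · intro x; right; positivity
  have hgcont : Continuous g := by
    apply Continuous.pow
    exact continuous_const.div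
      (continuous_const.add ((continuous_id.sub continuous_const).norm.pow 2))
      (fun x => (by positivity : (0:ℝ) < ε ^ 2 + ‖x - z‖ ^ 2).ne')
  -- integrability of g
  have hrpow_eq : ∀ t : ℝ, 0 ≤ t → (1 + t) ^ (-(2 * (N:ℝ))) = (((1 + t) ^ 2) ^ N)⁻¹ := by
    intro t ht
    have h1t : (0:ℝ) < 1 + t := by linarith
    rw [← pow_mul, ← Real.rpow_natCast (1 + t) (2 * N), ← Real.rpow_neg h1t.le]
    push_cast
    ring_nf
  have hgint : Integrable g volume := by
    set G : Rn N → ℝ := fun y => (ε / (ε ^ 2 + ‖y‖ ^ 2)) ^ N with hG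
    have hGcont : Continuous G := by
      apply Continuous.pow
      exact continuous_const.div
        (continuous_const.add (continuous_norm.pow 2))
        (fun x => (by positivity : (0:ℝ) < ε ^ 2 + ‖x‖ ^ 2).ne')
    have hGint : Integrable G volume := by
      apply Integrable.mono' (hJint.const_mul ((2 * ε⁻¹) ^ N)) hGcont.aestronglyMeasurable
      filter_upwards with y
      set t := ‖y‖ with ht
      have ht0 : 0 ≤ t := norm_nonneg y
      have h1t : (0:ℝ) < 1 + t := by linarith
      have hGnn : 0 ≤ G y := pow_nonneg (by positivity) N
      rw [Real.norm_of_nonneg hGnn, hrpow_eq t ht0]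
      have hkey : ε / (ε ^ 2 + t ^ 2) ≤ 2 * ε⁻¹ * ((1 + t) ^ 2)⁻¹ := by
        rw [div_le_iff₀ (by positivity)]
        have hε1' : ε ≤ 1 := by linarith
        have hA : (1 + t) ^ 2 ≤ 2 + 2 * t ^ 2 := by nlinarith [sq_nonneg (1 - t)]
        have hB : ε ^ 2 ≤ 1 := by nlinarith
        have h2 : ε ^ 2 * (1 + t) ^ 2 ≤ 2 * (ε ^ 2 + t ^ 2) := by
          calc ε ^ 2 * (1 + t) ^ 2 ≤ ε ^ 2 * (2 + 2 * t ^ 2) :=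
                mul_le_mul_of_nonneg_left hA (by positivity)
            _ ≤ 2 * (ε ^ 2 + t ^ 2) := by nlinarith [sq_nonneg t]
        rw [show 2 * ε⁻¹ * ((1 + t) ^ 2)⁻¹ * (ε ^ 2 + t ^ 2)
            = 2 * (ε ^ 2 + t ^ 2) / (ε * (1 + t) ^ 2) by field_simp]
        rw [le_div_iff₀ (by positivity)]
        nlinarith [h2, hε0]
      calc G y ≤ (2 * ε⁻¹ * ((1 + t) ^ 2)⁻¹) ^ N :=
            pow_le_pow_left₀ (by positivity) hkey N
        _ = (2 * ε⁻¹) ^ N * (((1 + t) ^ 2) ^ N)⁻¹ := by rw [mul_pow, inv_pow]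
    have : g = fun x => G (x - z) := rfl
    rw [this]
    exact hGint.comp_sub_right z
  -- integrability of f2
  have hf2cont : Continuous (fun x : Rn N => |φ x * bubble N s ε z x| ^ p) := by
    apply Continuous.rpow_const
    · exact (hφ.smooth.continuous.mul hbubcont).abs
    · intro x; right; exact hp0
  have hf2nn : ∀ x : Rn N, 0 ≤ |φ x * bubble N s ε z x| ^ p :=
    fun x => Real.rpow_nonneg (abs_nonneg _) _
  have hf2int : Integrable (fun x : Rn N => |φ x * bubble N s ε z x| ^ p) volume := by
    apply Integrable.mono' hgint hf2cont.aestronglyMeasurable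
    filter_upwards with x
    rw [Real.norm_of_nonneg (hf2nn x)]
    exact key2 x
  -- the set E
  set E : Set (Rn N) := Metric.closedBall (0 : Rn N) 3 \ Metric.ball (0 : Rn N) (4 * δ) with hE
  have hEm : MeasurableSet E := measurableSet_closedBall.diff measurableSet_ball
  have hint1 : (∫ x : Rn N, |bubble N s ε z x| ^ p) = ∫ x : Rn N, g x := by
    exact integral_congr_ae (Filter.Eventually.of_forall key)
  have hsplit : (∫ x : Rn N, g x) = (∫ x in E, g x) + ∫ x in Eᶜ, g x :=
    (integral_add_compl hEm hgint).symm
  -- on E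
  have hEbound : (∫ x in E, g x) ≤ ∫ x : Rn N, |φ x * bubble N s ε z x| ^ p := by
    have heq : (∫ x in E, g x) = ∫ x in E, |φ x * bubble N s ε z x| ^ p := by
      apply setIntegral_congr_fun hEm
      intro x hx
      show g x = |φ x * bubble N s ε z x| ^ p
      have hx1 : ‖x‖ ≤ 3 := by
        have := hx.1; rwa [Metric.mem_closedBall, dist_zero_right] at this
      have hx2 : 4 * δ ≤ ‖x‖ := by
        have := hx.2; rw [Metric.mem_ball, dist_zero_right] at this; linarith [not_lt.mp this]
      rw [hφ.eq_one_mid x hx2 hx1, one_mul]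
      exact (key x).symm
    rw [heq]
    exact setIntegral_le_integral hf2int (Filter.Eventually.of_forall hf2nn)
  -- on Eᶜ
  have hEc : Eᶜ = Metric.ball (0 : Rn N) (4 * δ) ∪ (Metric.closedBall (0 : Rn N) 3)ᶜ := by
    rw [hE, Set.diff_eq, Set.compl_inter, compl_compl, Set.union_comm]
  have hsub : Metric.ball (0 : Rn N) (4 * δ) ⊆ Metric.closedBall (0 : Rn N) 3 :=
    (Metric.ball_subset_ball (by linarith)).trans Metric.ball_subset_closedBall
  have hdisj : Disjoint (Metric.ball (0 : Rn N) (4 * δ)) (Metric.closedBall (0 : Rn N) 3)ᶜ :=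
    disjoint_compl_right.mono_left hsub
  have hEcInt : (∫ x in Eᶜ, g x) =
      (∫ x in Metric.ball (0 : Rn N) (4 * δ), g x) +
      ∫ x in (Metric.closedBall (0 : Rn N) 3)ᶜ, g x := by
    rw [hEc]
    exact setIntegral_union hdisj measurableSet_closedBall.compl
      hgint.integrableOn hgint.integrableOn
  -- inner ball bound
  have hball : (∫ x in Metric.ball (0 : Rn N) (4 * δ), g x) ≤ 4 ^ N * volB * (δ / ε) ^ N := by
    have hmono : (∫ x in Metric.ball (0 : Rn N) (4 * δ), g x) ≤
        ∫ _x in Metric.ball (0 : Rn N) (4 * δ), (ε⁻¹) ^ N := by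
      apply setIntegral_mono_on hgint.integrableOn
        ((integrableOn_const_iff).mpr (Or.inr measure_ball_lt_top)) measurableSet_ball
      intro x _
      apply pow_le_pow_left₀ (hbase x).le
      have h1 : ε / (ε ^ 2 + ‖x - z‖ ^ 2) ≤ ε / ε ^ 2 := by
        apply div_le_div_of_nonneg_left hε0.le (by positivity)
        nlinarith [sq_nonneg ‖x - z‖]
      have h2 : ε / ε ^ 2 = ε⁻¹ := by
        rw [pow_two]; field_simp
      linarith
    have hvol : (volume (Metric.ball (0 : Rn N) (4 * δ))).toReal = (4 * δ) ^ N * volB := by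
      rw [Measure.addHaar_ball volume (0 : Rn N) (by positivity : (0:ℝ) ≤ 4 * δ),
        finrank_euclideanSpace_fin, ENNReal.toReal_mul, ENNReal.toReal_ofReal (by positivity)]
    rw [setIntegral_const, smul_eq_mul, measureReal_def, hvol] at hmono
    calc (∫ x in Metric.ball (0 : Rn N) (4 * δ), g x) ≤ (4 * δ) ^ N * volB * (ε⁻¹) ^ N := hmono
      _ = 4 ^ N * volB * (δ / ε) ^ N := by
          rw [mul_pow, div_pow, div_eq_mul_inv, ← inv_pow]; ring
  -- outer bound
  have houter : (∫ x in (Metric.closedBall (0 : Rn N) 3)ᶜ, g x) ≤ 4 ^ N * CJ * ε ^ N := by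
    have hmono : (∫ x in (Metric.closedBall (0 : Rn N) 3)ᶜ, g x) ≤
        ∫ x in (Metric.closedBall (0 : Rn N) 3)ᶜ,
          (4 * ε) ^ N * (1 + ‖x‖) ^ (-(2 * (N:ℝ))) := by
      apply setIntegral_mono_on hgint.integrableOn
        ((hJint.const_mul ((4 * ε) ^ N)).integrableOn) measurableSet_closedBall.compl
      intro x hx
      have hx3 : 3 < ‖x‖ := by
        rw [Set.mem_compl_iff, Metric.mem_closedBall, dist_zero_right, not_le] at hx
        exact hx
      have ht0 : (0:ℝ) ≤ ‖x‖ := norm_nonneg x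
      rw [hrpow_eq ‖x‖ ht0]
      have h1 : (1 + ‖x‖) / 2 ≤ ‖x - z‖ := by
        have := norm_sub_norm_le x z
        linarith
      have hkey : ε / (ε ^ 2 + ‖x - z‖ ^ 2) ≤ 4 * ε * ((1 + ‖x‖) ^ 2)⁻¹ := by
        rw [div_le_iff₀ (by positivity)]
        have h2 : ((1 + ‖x‖) / 2) ^ 2 ≤ ‖x - z‖ ^ 2 := by
          apply pow_le_pow_left₀ (by positivity) h1
        have h3 : (1 + ‖x‖) ^ 2 / 4 ≤ ε ^ 2 + ‖x - z‖ ^ 2 := by nlinarith [sq_nonneg ε]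
        rw [show 4 * ε * ((1 + ‖x‖) ^ 2)⁻¹ * (ε ^ 2 + ‖x - z‖ ^ 2)
            = 4 * ε * (ε ^ 2 + ‖x - z‖ ^ 2) / (1 + ‖x‖) ^ 2 by field_simp]
        rw [le_div_iff₀ (by positivity)]
        nlinarith [h3, hε0]
      calc g x ≤ (4 * ε * ((1 + ‖x‖) ^ 2)⁻¹) ^ N :=
            pow_le_pow_left₀ (hbase x).le hkey N
        _ = (4 * ε) ^ N * (((1 + ‖x‖) ^ 2) ^ N)⁻¹ := by rw [mul_pow, inv_pow]
    have hle2 : (∫ x in (Metric.closedBall (0 : Rn N) 3)ᶜ,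
          (4 * ε) ^ N * (1 + ‖x‖) ^ (-(2 * (N:ℝ))))
        ≤ ∫ x : Rn N, (4 * ε) ^ N * (1 + ‖x‖) ^ (-(2 * (N:ℝ))) := by
      apply setIntegral_le_integral (hJint.const_mul _)
      filter_upwards with x
      positivity
    have heq3 : (∫ x : Rn N, (4 * ε) ^ N * (1 + ‖x‖) ^ (-(2 * (N:ℝ))))
        = (4 * ε) ^ N * CJ := integral_const_mul _ _
    calc (∫ x in (Metric.closedBall (0 : Rn N) 3)ᶜ, g x) ≤ (4 * ε) ^ N * CJ := by
          rw [← heq3]; exact hmono.trans hle2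
      _ = 4 ^ N * CJ * ε ^ N := by rw [mul_pow]; ring
  -- combine
  have hdpow : (0:ℝ) ≤ (δ / ε) ^ N := by positivity
  have hepow : (0:ℝ) ≤ ε ^ N := by positivity
  have h4v : (0:ℝ) ≤ 4 ^ N * volB := by positivity
  have h4c : (0:ℝ) ≤ 4 ^ N * CJ := by positivity
  have hfinal : 4 ^ N * volB * (δ / ε) ^ N + 4 ^ N * CJ * ε ^ N
      ≤ (4 ^ N * volB + 4 ^ N * CJ) * ((δ / ε) ^ N + ε ^ N) := by nlinarith
  rw [hint1, hsplit]
  linarith [hEbound, hEcInt, hball, houter]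
end

section
/- There exists a constant C₂ > 0, depending only on N and s, such that for every δ, ε ∈ (0,1/20], every z ∈ B₁∖B_{1/2}, and every admissible cutoff φ_δ, one has ∫_{ℝ^N} |u_{δ,ε,z}|^{2N/(N−2s)} dx ≥ ∫_{ℝ^N} |U_{ε,z}|^{2N/(N−2s)} dx − C₂ ε^N. -/
open MeasureTheory Filter Set

lemma stmt4_auxF (N : ℕ) (hN : 1 ≤ N) (a : ℝ) :
    Integrable (fun y : Rn N => (a / (1 + ‖y‖) ^ 2) ^ (N : ℝ)) := by
  have key : ∀ y : Rn N, (a / (1 + ‖y‖) ^ 2) ^ (N : ℝ)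
      = a ^ N * (1 + ‖y‖) ^ (-(2 * (N : ℝ))) := by
    intro y
    have h1 : (0:ℝ) < 1 + ‖y‖ := by positivity
    rw [Real.rpow_natCast, div_pow, ← pow_mul, Real.rpow_neg h1.le]
    rw [show (2 * (N:ℝ)) = ((2*N : ℕ) : ℝ) by push_cast; ring, Real.rpow_natCast,
      div_eq_mul_inv]
  simp only [key]
  have hr : ((Module.finrank ℝ (Rn N)) : ℝ) < 2 * N := by
    rw [finrank_euclideanSpace_fin]
    have : (1:ℝ) ≤ N := by exact_mod_cast hN
    linarith
  exact (integrable_one_add_norm hr).const_mul _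

lemma stmt4_auxT (N : ℕ) (hN : 1 ≤ N) (z : Rn N) (a : ℝ) :
    Integrable (fun x : Rn N => (a / (1 + ‖x - z‖) ^ 2) ^ (N : ℝ)) ∧
    ∫ x : Rn N, (a / (1 + ‖x - z‖) ^ 2) ^ (N : ℝ)
      = ∫ y : Rn N, (a / (1 + ‖y‖) ^ 2) ^ (N : ℝ) :=
  ⟨(stmt4_auxF N hN a).comp_sub_right z,
    integral_sub_right_eq_self (fun y : Rn N => (a / (1 + ‖y‖) ^ 2) ^ (N : ℝ)) z⟩

/-- the lower bound on the critical Lebesgue norm of the truncated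
bubble, `z ∈ B₁ ∖ B_{1/2}`. -/
theorem stmt4 (N : ℕ) (s : ℝ) (hN : 2 ≤ N) (hs0 : 0 < s) (hs1 : s < 1)
    (hNs : 2 * s < N) :
    ∃ C₂ : ℝ, 0 < C₂ ∧
      ∀ δ ε : ℝ, δ ∈ Set.Ioc (0 : ℝ) (1 / 20) → ε ∈ Set.Ioc (0 : ℝ) (1 / 20) →
        ∀ z : Rn N, ‖z‖ ≤ 1 → ¬ ‖z‖ ≤ 1 / 2 →
          ∀ φ : Rn N → ℝ, IsCutoff N δ φ →
            (∫ x : Rn N, |bubble N s ε z x| ^ (2 * (N : ℝ) / ((N : ℝ) - 2 * s))) -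
                C₂ * ε ^ N ≤
              ∫ x : Rn N, |φ x * bubble N s ε z x| ^ (2 * (N : ℝ) / ((N : ℝ) - 2 * s)) := by
  have hN1 : 1 ≤ N := le_trans one_le_two hN
  set c : ℝ := ∫ y : Rn N, ((169/9 : ℝ) / (1 + ‖y‖) ^ 2) ^ (N : ℝ) with hc
  have hc0 : 0 ≤ c := integral_nonneg fun y => Real.rpow_nonneg (by positivity) _
  refine ⟨c + 1, by linarith, ?_⟩
  rintro δ ε ⟨hδ0, hδ1⟩ ⟨hε0, hε1⟩ z hz1 hz2 φ hφ
  push_neg at hz2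
  have hNs' : (0:ℝ) < (N:ℝ) - 2 * s := by
    have : (2:ℝ) * s < N := hNs
    linarith
  -- the pure power function
  set g : Rn N → ℝ := fun x => (ε / (ε ^ 2 + ‖x - z‖ ^ 2)) ^ (N : ℝ) with hgdef
  have hden : ∀ x : Rn N, (0:ℝ) < ε ^ 2 + ‖x - z‖ ^ 2 := fun x => by positivity
  have hbase : ∀ x : Rn N, (0:ℝ) ≤ ε / (ε ^ 2 + ‖x - z‖ ^ 2) := fun x => by positivity
  have hgnn : ∀ x, 0 ≤ g x := fun x => Real.rpow_nonneg (hbase x) _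
  have hg : ∀ x : Rn N, |bubble N s ε z x| ^ (2 * (N : ℝ) / ((N : ℝ) - 2 * s)) = g x := by
    intro x
    unfold bubble
    rw [abs_of_nonneg (Real.rpow_nonneg (hbase x) _), ← Real.rpow_mul (hbase x)]
    congr 1
    have h2 : (N:ℝ) - 2 * s ≠ 0 := ne_of_gt hNs'
    field_simp
  have hp0 : (0:ℝ) ≤ 2 * (N : ℝ) / ((N : ℝ) - 2 * s) :=
    div_nonneg (by positivity) hNs'.le
  have hphi : ∀ x : Rn N, |φ x * bubble N s ε z x| ^ (2 * (N : ℝ) / ((N : ℝ) - 2 * s))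
      = |φ x| ^ (2 * (N : ℝ) / ((N : ℝ) - 2 * s)) * g x := by
    intro x
    rw [abs_mul, Real.mul_rpow (abs_nonneg _) (abs_nonneg _), hg x]
  have hphile : ∀ x : Rn N, |φ x| ^ (2 * (N : ℝ) / ((N : ℝ) - 2 * s)) ≤ 1 := by
    intro x
    apply Real.rpow_le_one (abs_nonneg _) _ hp0
    rcases hφ.mem01 x with ⟨h1, h2⟩
    rw [abs_le]; constructor <;> linarith
  -- continuity
  have hgcont : Continuous g := by
    apply Continuous.rpow_const
    · exact continuous_const.div (by fun_prop) fun x => (hden x).ne'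
    · exact fun x => Or.inr (Nat.cast_nonneg N)
  -- integrability of g
  have hgint : Integrable g := by
    refine ((stmt4_auxT N hN1 z (2/ε)).1).mono' hgcont.aestronglyMeasurable
      (Eventually.of_forall fun x => ?_)
    rw [Real.norm_of_nonneg (hgnn x)]
    apply Real.rpow_le_rpow (hbase x) _ (Nat.cast_nonneg N)
    rw [div_le_div_iff₀ (hden x) (by positivity), div_mul_eq_mul_div, le_div_iff₀ hε0]
    have ht0 : (0:ℝ) ≤ ‖x - z‖ := norm_nonneg _
    have hε1' : ε ≤ 1 := le_trans hε1 (by norm_num)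
    have h1 : (0:ℝ) ≤ 1 - ε^2 := by nlinarith
    nlinarith [mul_nonneg (sq_nonneg ε) (sq_nonneg (1 - ‖x - z‖)),
      mul_nonneg h1 (sq_nonneg (‖x - z‖))]
  -- integrability of |φ·U|^p
  have hfcont : Continuous fun x : Rn N =>
      |φ x * bubble N s ε z x| ^ (2 * (N : ℝ) / ((N : ℝ) - 2 * s)) := by
    apply Continuous.rpow_const
    · apply Continuous.abs
      apply hφ.smooth.continuous.mul
      unfold bubble
      apply Continuous.rpow_const
      · exact continuous_const.div (by fun_prop) fun x => (hden x).ne'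
      · exact fun x => Or.inr (by positivity)
    · exact fun x => Or.inr hp0
  have hfnn : ∀ x : Rn N, 0 ≤ |φ x * bubble N s ε z x| ^ (2 * (N : ℝ) / ((N : ℝ) - 2 * s)) :=
    fun x => Real.rpow_nonneg (abs_nonneg _) _
  have hfint : Integrable fun x : Rn N =>
      |φ x * bubble N s ε z x| ^ (2 * (N : ℝ) / ((N : ℝ) - 2 * s)) := by
    refine hgint.mono' hfcont.aestronglyMeasurable (Eventually.of_forall fun x => ?_)
    rw [Real.norm_of_nonneg (hfnn x), hphi x]
    exact mul_le_of_le_one_left (hgnn x) (hphile x)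
  -- the bad set
  set A : Set (Rn N) := {x : Rn N | ‖x‖ < 4 * δ ∨ 3 < ‖x‖} with hAdef
  have hA : MeasurableSet A := by
    apply MeasurableSet.union
    · exact measurableSet_lt continuous_norm.measurable measurable_const
    · exact measurableSet_lt measurable_const continuous_norm.measurable
  have hhint : Integrable (A.indicator g) := hgint.indicator hA
  -- pointwise bound: g ≤ |φ U|^p + indicator
  have hpt : ∀ x : Rn N, g x ≤
      |φ x * bubble N s ε z x| ^ (2 * (N : ℝ) / ((N : ℝ) - 2 * s)) + A.indicator g x := by
    intro x
    by_cases hx : x ∈ A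
    · rw [Set.indicator_of_mem hx]
      have := hfnn x
      linarith
    · rw [Set.indicator_of_notMem hx]
      have hx' : 4 * δ ≤ ‖x‖ ∧ ‖x‖ ≤ 3 := by
        rw [hAdef, Set.mem_setOf_eq, not_or, not_lt, not_lt] at hx
        exact hx
      rw [hphi x, hφ.eq_one_mid x hx'.1 hx'.2]
      simp
  -- distance bound on A
  have hdist : ∀ x ∈ A, (3/10 : ℝ) ≤ ‖x - z‖ := by
    intro x hx
    rcases hx with hx | hx
    · have h1 : ‖z‖ - ‖x‖ ≤ ‖z - x‖ := norm_sub_norm_le z x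
      rw [norm_sub_rev] at h1
      have : ‖x‖ < 1/5 := lt_of_lt_of_le hx (by linarith)
      linarith
    · have h1 : ‖x‖ - ‖z‖ ≤ ‖x - z‖ := norm_sub_norm_le x z
      linarith
  -- bound on the indicator integral
  set D : Rn N → ℝ := fun x => (ε * (169/9) / (1 + ‖x - z‖) ^ 2) ^ (N : ℝ) with hDdef
  have hDeq : ∀ x : Rn N, D x = ε ^ (N : ℝ) * ((169/9 : ℝ) / (1 + ‖x - z‖) ^ 2) ^ (N : ℝ) := by
    intro x
    show (ε * (169/9) / (1 + ‖x - z‖) ^ 2) ^ (N : ℝ)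
      = ε ^ (N : ℝ) * ((169/9 : ℝ) / (1 + ‖x - z‖) ^ 2) ^ (N : ℝ)
    rw [mul_div_assoc, Real.mul_rpow hε0.le (by positivity)]
  have hDint : Integrable D := by
    have := (stmt4_auxT N hN1 z (ε * (169/9))).1
    exact this
  have hindD : ∀ x : Rn N, A.indicator g x ≤ D x := by
    intro x
    by_cases hx : x ∈ A
    · rw [Set.indicator_of_mem hx]
      apply Real.rpow_le_rpow (hbase x) _ (Nat.cast_nonneg N)
      rw [div_le_div_iff₀ (hden x) (by positivity)]
      have ht := hdist x hx
      nlinarith [sq_nonneg ε, sq_nonneg (‖x - z‖ - 3/10), norm_nonneg (x - z),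
        mul_nonneg hε0.le (sq_nonneg (‖x - z‖ - 3/10)), mul_nonneg hε0.le (sq_nonneg ε)]
    · rw [Set.indicator_of_notMem hx]
      exact Real.rpow_nonneg (by positivity) _
  have hDval : ∫ x : Rn N, D x = ε ^ (N : ℝ) * c := by
    calc ∫ x : Rn N, D x
        = ∫ x : Rn N, ε ^ (N : ℝ) * ((169/9 : ℝ) / (1 + ‖x - z‖) ^ 2) ^ (N : ℝ) := by
          exact integral_congr_ae (Eventually.of_forall hDeq)
      _ = ε ^ (N : ℝ) * ∫ x : Rn N, ((169/9 : ℝ) / (1 + ‖x - z‖) ^ 2) ^ (N : ℝ) :=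
          integral_const_mul _ _
      _ = ε ^ (N : ℝ) * c := by rw [(stmt4_auxT N hN1 z (169/9)).2]
  have hind_le : ∫ x : Rn N, A.indicator g x ≤ (c + 1) * ε ^ N := by
    calc ∫ x : Rn N, A.indicator g x ≤ ∫ x : Rn N, D x :=
          integral_mono hhint hDint hindD
      _ = ε ^ (N : ℝ) * c := hDval
      _ ≤ (c + 1) * ε ^ N := by
          rw [Real.rpow_natCast]
          have hεN : (0:ℝ) ≤ ε ^ N := pow_nonneg hε0.le N
          nlinarith
  -- put everything together
  have hmain : ∫ x : Rn N, g x ≤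
      (∫ x : Rn N, |φ x * bubble N s ε z x| ^ (2 * (N : ℝ) / ((N : ℝ) - 2 * s)))
        + ∫ x : Rn N, A.indicator g x := by
    rw [← integral_add hfint hhint]
    exact integral_mono hgint (hfint.add hhint) hpt
  have hUg : (∫ x : Rn N, |bubble N s ε z x| ^ (2 * (N : ℝ) / ((N : ℝ) - 2 * s)))
      = ∫ x : Rn N, g x := by
    exact integral_congr_ae (Eventually.of_forall hg)
  rw [hUg]
  linarith
end

section
/- Let Ω ⊂ ℝ^N be a bounded open set and let u ∈ X₀ be a sign-changing weak solution, i.e. ⟨u,φ⟩ = ∫_Ω |u|^{4s/(N−2s)} u φ dx for every φ ∈ X₀, with u⁺ ≠ 0 and u⁻ ≠ 0 (as elements of L^{2N/(N−2s)}). Then ‖u‖² ≥ 2 S^{N/(2s)}. -/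
open MeasureTheory Filter Set

section helper

private lemma div_le_div_nonneg' {a b c : ℝ} (h : a ≤ b) (hc : 0 ≤ c) : a / c ≤ b / c := by
  rcases eq_or_lt_of_le hc with rfl | hc
  · simp
  · exact (div_le_div_iff_of_pos_right hc).2 h

private lemma aesm_gag {N : ℕ} {s : ℝ} (hc : (0:ℝ) ≤ (N : ℝ) + 2 * s) {f g : Rn N → ℝ}
    (hf : AEStronglyMeasurable f volume) (hg : AEStronglyMeasurable g volume) :
    AEStronglyMeasurable (fun p : Rn N × Rn N =>
      (f p.1 - f p.2) * (g p.1 - g p.2) / ‖p.1 - p.2‖ ^ ((N : ℝ) + 2 * s)) volume := by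
  have hq1 : Measure.QuasiMeasurePreserving (Prod.fst : Rn N × Rn N → Rn N) volume volume := by
    rw [Measure.volume_eq_prod]; exact Measure.quasiMeasurePreserving_fst
  have hq2 : Measure.QuasiMeasurePreserving (Prod.snd : Rn N × Rn N → Rn N) volume volume := by
    rw [Measure.volume_eq_prod]; exact Measure.quasiMeasurePreserving_snd
  have h1 := hf.comp_quasiMeasurePreserving hq1
  have h2 := hf.comp_quasiMeasurePreserving hq2
  have h3 := hg.comp_quasiMeasurePreserving hq1
  have h4 := hg.comp_quasiMeasurePreserving hq2
  have hk : Measurable fun p : Rn N × Rn N => ‖p.1 - p.2‖ ^ ((N : ℝ) + 2 * s) := by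
    have : Continuous fun p : Rn N × Rn N => ‖p.1 - p.2‖ ^ ((N : ℝ) + 2 * s) :=
      (continuous_fst.sub continuous_snd).norm.rpow_const (fun x => Or.inr hc)
    exact this.measurable
  exact (((h1.sub h2).mul (h3.sub h4)).aemeasurable.div hk.aemeasurable).aestronglyMeasurable

end helper

section main
open MeasureTheory

private lemma lip_of_abs {g : ℝ → ℝ} (h : ∀ a b : ℝ, |g a - g b| ≤ |a - b|) :
    LipschitzWith 1 g :=
  LipschitzWith.of_dist_le_mul fun a b => by
    simpa [Real.dist_eq] using h a b

private lemma rpow_core {N : ℕ} {s : ℝ} (hs0 : 0 < s) (hNs' : (0:ℝ) < (N:ℝ) - 2 * s) (t : ℝ) :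
    |t| ^ (4 * s / ((N : ℝ) - 2 * s)) * t * t = |t| ^ (2 * (N : ℝ) / ((N : ℝ) - 2 * s)) := by
  have hN0 : (0:ℝ) < (N:ℝ) := by linarith
  have hp : 2 * (N:ℝ) / ((N:ℝ) - 2*s) = 4 * s / ((N:ℝ) - 2*s) + 2 := by
    field_simp; ring
  rcases eq_or_ne t 0 with rfl | ht
  · have h1 : (2 * (N:ℝ) / ((N:ℝ) - 2*s)) ≠ 0 := by positivity
    simp [Real.zero_rpow h1]
  · have habs : 0 < |t| := abs_pos.2 ht
    rw [hp, Real.rpow_add habs, Real.rpow_two, sq_abs]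
    ring

private lemma int_rpow {N : ℕ} {s : ℝ} (hs0 : 0 < s) (hNs' : (0:ℝ) < (N:ℝ) - 2 * s)
    {v : Rn N → ℝ} (hv : MemLp v (ENNReal.ofReal (2 * N / (N - 2 * s))) volume) :
    Integrable (fun x : Rn N => |v x| ^ (2 * (N:ℝ) / ((N:ℝ) - 2 * s))) volume := by
  have hN0 : (0:ℝ) < (N:ℝ) := by linarith
  have hp0 : (0:ℝ) < 2 * (N:ℝ) / ((N:ℝ) - 2 * s) := by positivity
  have h := hv.integrable_norm_rpow
    (by simp [ENNReal.ofReal_pos.2 hp0, (ENNReal.ofReal_pos.2 hp0).ne'])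
    ENNReal.ofReal_ne_top
  simpa [ENNReal.toReal_ofReal hp0.le, Real.norm_eq_abs] using h

private lemma part_bound (N : ℕ) (s : ℝ) (hN : 2 ≤ N) (hs0 : 0 < s) (hNs : 2 * s < N)
    (Ω : Set (Rn N)) (u : Rn N → ℝ) (hu : MemX0 N s Ω u)
    (hsol : ∀ φ : Rn N → ℝ, MemX0 N s Ω φ →
      gagInner N s u φ = ∫ x in Ω, |u x| ^ (4 * s / ((N : ℝ) - 2 * s)) * u x * φ x)
    (g : ℝ → ℝ) (hg0 : g 0 = 0) (hglip : ∀ a b : ℝ, |g a - g b| ≤ |a - b|)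
    (hgineq : ∀ a b : ℝ, (g a - g b) ^ 2 ≤ (a - b) * (g a - g b))
    (hgpoint : ∀ t : ℝ, |t| ^ (4 * s / ((N : ℝ) - 2 * s)) * t * g t
      = |g t| ^ (2 * (N : ℝ) / ((N : ℝ) - 2 * s)))
    (hgne : ¬ (fun x => g (u x)) =ᵐ[volume] (fun _ => (0 : ℝ))) :
    Sconst N s ^ ((N : ℝ) / (2 * s)) ≤
      ∫ x : Rn N, |g (u x)| ^ (2 * (N : ℝ) / ((N : ℝ) - 2 * s)) := by
  have hN0 : (0:ℝ) < (N:ℝ) := by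
    have : (2:ℝ) ≤ (N:ℝ) := by exact_mod_cast hN
    linarith
  have hNs' : (0:ℝ) < (N:ℝ) - 2 * s := by linarith
  have hc : (0:ℝ) ≤ (N:ℝ) + 2 * s := by linarith
  set p : ℝ := 2 * (N:ℝ) / ((N:ℝ) - 2 * s) with hpdef
  have hp0 : 0 < p := by positivity
  set v : Rn N → ℝ := fun x => g (u x) with hvdef
  have husm : AEStronglyMeasurable u volume := hu.1.1.aestronglyMeasurable
  have hvℒ : MemLp v (ENNReal.ofReal (2 * N / (N - 2 * s))) volume := by
    have := (lip_of_abs hglip).comp_memLp hg0 hu.1.1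
    exact this
  have hvsm : AEStronglyMeasurable v volume := hvℒ.aestronglyMeasurable
  -- Integrability of the Gagliardo integrand of v
  have hkern : ∀ q : Rn N × Rn N, (0:ℝ) ≤ ‖q.1 - q.2‖ ^ ((N : ℝ) + 2 * s) :=
    fun q => Real.rpow_nonneg (norm_nonneg _) _
  have hEqv : (fun q : Rn N × Rn N =>
      (v q.1 - v q.2) * (v q.1 - v q.2) / ‖q.1 - q.2‖ ^ ((N : ℝ) + 2 * s))
      = fun q => (v q.1 - v q.2) ^ 2 / ‖q.1 - q.2‖ ^ ((N : ℝ) + 2 * s) := by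
    funext q; rw [sq]
  have hvI : Integrable (fun q : Rn N × Rn N =>
      (v q.1 - v q.2) ^ 2 / ‖q.1 - q.2‖ ^ ((N : ℝ) + 2 * s)) volume := by
    refine hu.1.2.mono ?_ (Eventually.of_forall fun q => ?_)
    · rw [← hEqv]; exact aesm_gag hc hvsm hvsm
    · have h1 : (v q.1 - v q.2) ^ 2 ≤ (u q.1 - u q.2) ^ 2 := by
        rw [← sq_abs (v q.1 - v q.2), ← sq_abs (u q.1 - u q.2)]
        exact pow_le_pow_left₀ (abs_nonneg _) (hglip _ _) 2
      rw [Real.norm_eq_abs, Real.norm_eq_abs,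
        abs_of_nonneg (by positivity), abs_of_nonneg (by positivity)]
      exact div_le_div_nonneg' h1 (hkern q)
  have hvX0 : MemX0 N s Ω v :=
    ⟨⟨hvℒ, hvI⟩, hu.2.mono fun x hx hxΩ => by rw [hvdef]; simp [hx hxΩ, hg0]⟩
  -- Integrability of the mixed Gagliardo integrand
  have hIuv : Integrable (fun q : Rn N × Rn N =>
      (u q.1 - u q.2) * (v q.1 - v q.2) / ‖q.1 - q.2‖ ^ ((N : ℝ) + 2 * s)) volume := by
    refine hu.1.2.mono (aesm_gag hc husm hvsm) (Eventually.of_forall fun q => ?_)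
    have h1 : |(u q.1 - u q.2) * (v q.1 - v q.2)| ≤ (u q.1 - u q.2) ^ 2 := by
      rw [abs_mul, ← sq_abs (u q.1 - u q.2), sq]
      exact mul_le_mul_of_nonneg_left (hglip _ _) (abs_nonneg _)
    rw [Real.norm_eq_abs, Real.norm_eq_abs, abs_div, abs_div,
      abs_of_nonneg (hkern q), abs_of_nonneg (sq_nonneg (u q.1 - u q.2))]
    exact div_le_div_nonneg' h1 (hkern q)
  -- ‖v‖² ≤ ⟨u,v⟩
  have hA_le : gagNormSq N s v ≤ gagInner N s u v := by
    unfold gagNormSq gagInner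
    rw [show (fun q : Rn N × Rn N =>
        (v q.1 - v q.2) * (v q.1 - v q.2) / ‖q.1 - q.2‖ ^ ((N : ℝ) + 2 * s))
        = fun q => (v q.1 - v q.2) ^ 2 / ‖q.1 - q.2‖ ^ ((N : ℝ) + 2 * s) from hEqv]
    refine integral_mono hvI hIuv fun q => ?_
    exact div_le_div_nonneg' (hgineq _ _) (hkern q)
  -- ⟨u,v⟩ = ∫ |v|^p
  have hD : gagInner N s u v = ∫ x : Rn N, |v x| ^ p := by
    rw [hsol v hvX0]
    have h1 : (∫ x in Ω, |u x| ^ (4 * s / ((N : ℝ) - 2 * s)) * u x * v x)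
        = ∫ x in Ω, |v x| ^ p := by
      refine integral_congr_ae (Eventually.of_forall fun x => ?_)
      exact hgpoint (u x)
    rw [h1]
    refine setIntegral_eq_integral_of_ae_compl_eq_zero (hvX0.2.mono fun x hx hxΩ => ?_)
    rw [hx hxΩ, abs_zero, Real.zero_rpow hp0.ne']
  set D : ℝ := ∫ x : Rn N, |v x| ^ p with hDdef
  have hDI : Integrable (fun x : Rn N => |v x| ^ p) volume := int_rpow hs0 hNs' hvℒ
  have hD0 : 0 ≤ D := integral_nonneg fun x => Real.rpow_nonneg (abs_nonneg _) _
  have hDpos : 0 < D := by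
    rcases hD0.lt_or_eq with h | h
    · exact h
    · exfalso
      have h0 : (fun x : Rn N => |v x| ^ p) =ᵐ[volume] 0 := by
        rw [← integral_eq_zero_iff_of_nonneg
          (fun x => Real.rpow_nonneg (abs_nonneg _) _) hDI]
        exact h.symm
      refine hgne (h0.mono fun x hx => ?_)
      have : |v x| ^ p = 0 := hx
      have h2 : |v x| = 0 := by
        by_contra h3
        exact h3 ((Real.rpow_eq_zero (abs_nonneg _) hp0.ne').1 this)
      simpa [abs_eq_zero] using h2
  -- the Sobolev set
  set T := { r : ℝ | ∃ w : Rn N → ℝ, MemHs N s w ∧ ¬ w =ᵐ[volume] (fun _ => (0 : ℝ)) ∧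
    r = gagNormSq N s w /
      (∫ x : Rn N, |w x| ^ (2 * (N : ℝ) / ((N : ℝ) - 2 * s))) ^ (((N : ℝ) - 2 * s) / (N : ℝ)) }
    with hTdef
  have hSconst : Sconst N s = sInf T := rfl
  have hlb : ∀ r ∈ T, (0:ℝ) ≤ r := by
    rintro r ⟨w, hw, hwne, rfl⟩
    have h1 : 0 ≤ gagNormSq N s w := by
      refine integral_nonneg fun q => ?_
      exact div_nonneg (mul_self_nonneg _) (hkern q)
    have h2 : 0 ≤ (∫ x : Rn N, |w x| ^ (2 * (N : ℝ) / ((N : ℝ) - 2 * s)))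
        ^ (((N : ℝ) - 2 * s) / (N : ℝ)) :=
      Real.rpow_nonneg (integral_nonneg fun x => Real.rpow_nonneg (abs_nonneg _) _) _
    exact div_nonneg h1 h2
  set θ : ℝ := ((N : ℝ) - 2 * s) / (N : ℝ) with hθdef
  have hmem : gagNormSq N s v / D ^ θ ∈ T := ⟨v, ⟨hvℒ, hvI⟩, hgne, rfl⟩
  have hS_le : Sconst N s ≤ gagNormSq N s v / D ^ θ :=
    hSconst ▸ csInf_le ⟨0, fun r hr => hlb r hr⟩ hmem
  have hS0 : 0 ≤ Sconst N s := hSconst ▸ le_csInf ⟨_, hmem⟩ hlb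
  have hchain : Sconst N s ≤ D ^ (2 * s / (N : ℝ)) := by
    have h1 : gagNormSq N s v / D ^ θ ≤ D / D ^ θ :=
      div_le_div_nonneg' (le_trans hA_le (le_of_eq hD)) (Real.rpow_nonneg hD0 _)
    have h2 : D / D ^ θ = D ^ (1 - θ) := by
      rw [Real.rpow_sub hDpos, Real.rpow_one]
    have h3 : (1:ℝ) - θ = 2 * s / (N : ℝ) := by
      rw [hθdef]; field_simp; ring
    calc Sconst N s ≤ gagNormSq N s v / D ^ θ := hS_le
      _ ≤ D / D ^ θ := h1
      _ = D ^ (2 * s / (N:ℝ)) := by rw [h2, h3]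
  calc Sconst N s ^ ((N : ℝ) / (2 * s))
      ≤ (D ^ (2 * s / (N : ℝ))) ^ ((N : ℝ) / (2 * s)) :=
        Real.rpow_le_rpow hS0 hchain (by positivity)
    _ = D ^ ((2 * s / (N : ℝ)) * ((N : ℝ) / (2 * s))) := (Real.rpow_mul hD0 _ _).symm
    _ = D := by
        rw [show (2 * s / (N : ℝ)) * ((N : ℝ) / (2 * s)) = 1 by
          field_simp]
        exact Real.rpow_one D

end main

section mainthm
open MeasureTheory

private lemma max_ineq' (a b : ℝ) :
    (max a 0 - max b 0) ^ 2 ≤ (a - b) * (max a 0 - max b 0) := by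
  rcases le_total a 0 with ha | ha <;> rcases le_total b 0 with hb | hb
  · rw [max_eq_right ha, max_eq_right hb]; nlinarith
  · rw [max_eq_right ha, max_eq_left hb]; nlinarith
  · rw [max_eq_left ha, max_eq_right hb]; nlinarith
  · rw [max_eq_left ha, max_eq_left hb]; nlinarith

private lemma min_ineq' (a b : ℝ) :
    (min a 0 - min b 0) ^ 2 ≤ (a - b) * (min a 0 - min b 0) := by
  rcases le_total a 0 with ha | ha <;> rcases le_total b 0 with hb | hb
  · rw [min_eq_left ha, min_eq_left hb]; nlinarith
  · rw [min_eq_left ha, min_eq_right hb]; nlinarith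
  · rw [min_eq_right ha, min_eq_left hb]; nlinarith
  · rw [min_eq_right ha, min_eq_right hb]; nlinarith

private lemma min_abs_le' (a b : ℝ) : |min a 0 - min b 0| ≤ |a - b| := by
  rcases le_total a 0 with ha | ha <;> rcases le_total b 0 with hb | hb
  · rw [min_eq_left ha, min_eq_left hb]
  · rw [min_eq_left ha, min_eq_right hb, sub_zero, abs_of_nonpos ha,
      abs_of_nonpos (by linarith : a - b ≤ 0)]; linarith
  · rw [min_eq_right ha, min_eq_left hb, zero_sub, abs_neg, abs_of_nonpos hb,
      abs_of_nonneg (by linarith : 0 ≤ a - b)]; linarith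
  · rw [min_eq_right ha, min_eq_right hb, sub_zero, abs_zero]; exact abs_nonneg _


/-- a sign-changing weak solution `u ∈ X₀` satisfies `‖u‖² ≥ 2 S^{N/(2s)}`. -/
theorem stmt7 (N : ℕ) (s : ℝ) (hN : 2 ≤ N) (hs0 : 0 < s) (hs1 : s < 1)
    (hNs : 2 * s < N)
    (Ω : Set (Rn N)) (hΩo : IsOpen Ω) (hΩb : Bornology.IsBounded Ω)
    (u : Rn N → ℝ) (hu : MemX0 N s Ω u)
    (hsol : ∀ φ : Rn N → ℝ, MemX0 N s Ω φ →
      gagInner N s u φ = ∫ x in Ω, |u x| ^ (4 * s / ((N : ℝ) - 2 * s)) * u x * φ x)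
    (hup : ¬ (fun x => max (u x) 0) =ᵐ[volume] (fun _ => (0 : ℝ)))
    (hum : ¬ (fun x => -min (u x) 0) =ᵐ[volume] (fun _ => (0 : ℝ))) :
    2 * Sconst N s ^ ((N : ℝ) / (2 * s)) ≤ gagNormSq N s u := by
  have hN0 : (0:ℝ) < (N:ℝ) := by
    have : (2:ℝ) ≤ (N:ℝ) := by exact_mod_cast hN
    linarith
  have hNs' : (0:ℝ) < (N:ℝ) - 2 * s := by linarith
  have hp0 : (0:ℝ) < 2 * (N:ℝ) / ((N:ℝ) - 2 * s) := by positivity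
  have hmaxpoint : ∀ t : ℝ, |t| ^ (4 * s / ((N : ℝ) - 2 * s)) * t * max t 0
      = |max t 0| ^ (2 * (N : ℝ) / ((N : ℝ) - 2 * s)) := by
    intro t
    rcases le_total t 0 with h | h
    · rw [max_eq_right h]; simp [Real.zero_rpow hp0.ne']
    · rw [max_eq_left h]; exact rpow_core hs0 hNs' t
  have hminpoint : ∀ t : ℝ, |t| ^ (4 * s / ((N : ℝ) - 2 * s)) * t * min t 0
      = |min t 0| ^ (2 * (N : ℝ) / ((N : ℝ) - 2 * s)) := by
    intro t
    rcases le_total t 0 with h | h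
    · rw [min_eq_left h]; exact rpow_core hs0 hNs' t
    · rw [min_eq_right h]; simp [Real.zero_rpow hp0.ne']
  have hminne : ¬ (fun x => min (u x) 0) =ᵐ[volume] (fun _ => (0:ℝ)) := by
    intro h
    exact hum (h.mono fun x hx => by simp [hx])
  have hmax := part_bound N s hN hs0 hNs Ω u hu hsol (fun t => max t 0)
      (max_eq_right le_rfl) (fun a b => abs_max_sub_max_le_abs a b 0)
      max_ineq' hmaxpoint hup
  have hmin := part_bound N s hN hs0 hNs Ω u hu hsol (fun t => min t 0)
      (min_eq_right le_rfl) min_abs_le' min_ineq' hminpoint hminne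
  have hmaxℒ : MemLp (fun x => max (u x) 0)
      (ENNReal.ofReal (2 * N / (N - 2 * s))) volume := by
    exact
      (lip_of_abs (fun a b => abs_max_sub_max_le_abs a b 0)).comp_memLp
        (max_eq_right le_rfl) hu.1.1
  have hminℒ : MemLp (fun x => min (u x) 0)
      (ENNReal.ofReal (2 * N / (N - 2 * s))) volume := by
    exact
      (lip_of_abs min_abs_le').comp_memLp (min_eq_right le_rfl) hu.1.1
  have hImax := int_rpow hs0 hNs' hmaxℒ
  have hImin := int_rpow hs0 hNs' hminℒ
  have hsplit : ∀ t : ℝ, |t| ^ (2 * (N : ℝ) / ((N : ℝ) - 2 * s))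
      = |max t 0| ^ (2 * (N : ℝ) / ((N : ℝ) - 2 * s))
        + |min t 0| ^ (2 * (N : ℝ) / ((N : ℝ) - 2 * s)) := by
    intro t
    rcases le_total t 0 with h | h
    · rw [max_eq_right h, min_eq_left h]; simp [Real.zero_rpow hp0.ne']
    · rw [max_eq_left h, min_eq_right h]; simp [Real.zero_rpow hp0.ne']
  have htot : gagNormSq N s u
      = (∫ x : Rn N, |max (u x) 0| ^ (2 * (N : ℝ) / ((N : ℝ) - 2 * s)))
        + ∫ x : Rn N, |min (u x) 0| ^ (2 * (N : ℝ) / ((N : ℝ) - 2 * s)) := by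
    have h1 : gagNormSq N s u = ∫ x in Ω, |u x| ^ (2 * (N : ℝ) / ((N : ℝ) - 2 * s)) := by
      unfold gagNormSq
      rw [hsol u hu]
      exact integral_congr_ae (Eventually.of_forall fun x => rpow_core hs0 hNs' (u x))
    have h2 : (∫ x in Ω, |u x| ^ (2 * (N : ℝ) / ((N : ℝ) - 2 * s)))
        = ∫ x : Rn N, |u x| ^ (2 * (N : ℝ) / ((N : ℝ) - 2 * s)) :=
      setIntegral_eq_integral_of_ae_compl_eq_zero (hu.2.mono fun x hx hxΩ => by
        rw [hx hxΩ, abs_zero, Real.zero_rpow hp0.ne'])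
    have h3 : (∫ x : Rn N, |u x| ^ (2 * (N : ℝ) / ((N : ℝ) - 2 * s)))
        = ∫ x : Rn N, (|max (u x) 0| ^ (2 * (N : ℝ) / ((N : ℝ) - 2 * s))
          + |min (u x) 0| ^ (2 * (N : ℝ) / ((N : ℝ) - 2 * s))) :=
      integral_congr_ae (Eventually.of_forall fun x => hsplit (u x))
    rw [h1, h2, h3, integral_add hImax hImin]
  linarith [hmax, hmin]
end mainthm
end

section
/- Let D = {(x,y) ∈ (B₄ × (ℝ^N∖B₃)) ∪ ((ℝ^N∖B₃) × B₄) : |x−y| > 1}. There exists C > 0, depending only on N and s, such that for every δ, ε ∈ (0,1/20], every z ∈ B₁, and every admissible cutoff φ_δ, one has ∬_D [ |u_{δ,ε,z}(x) − u_{δ,ε,z}(y)|² − |U_{ε,z}(x) − U_{ε,z}(y)|² ] / |x−y|^{N+2s} dx dy ≤ C ε^{N−2s}. -/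
open MeasureTheory Filter Set

section Aux

open Metric

/-- elementary algebra for the numerator -/
lemma aux_num (φx φy Ux Uy : ℝ) (h0x : 0 ≤ φx) (h1x : φx ≤ 1) (h0y : 0 ≤ φy)
    (h1y : φy ≤ 1) (hUx : 0 ≤ Ux) (hUy : 0 ≤ Uy) :
    (φx * Ux - φy * Uy) ^ 2 - (Ux - Uy) ^ 2 ≤ 2 * (Ux * Uy) := by
  nlinarith [mul_nonneg (mul_nonneg h0x h0y) (mul_nonneg hUx hUy),
    mul_nonneg hUx hUy, sq_nonneg Ux, sq_nonneg Uy,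
    mul_nonneg (mul_nonneg (sub_nonneg.2 h1x) (by linarith : (0:ℝ) ≤ 1 + φx)) (mul_nonneg hUx hUx),
    mul_nonneg (mul_nonneg (sub_nonneg.2 h1y) (by linarith : (0:ℝ) ≤ 1 + φy)) (mul_nonneg hUy hUy)]

/-- the far-field kernel is integrable -/
lemma aux_b_integrable (N : ℕ) (s : ℝ) (hN : 2 ≤ N) (hs0 : 0 < s) :
    Integrable (fun w : Rn N => if 1 < ‖w‖ then ‖w‖ ^ (-((N : ℝ) + 2 * s)) else 0) := by
  have hdim : (Module.finrank ℝ (Rn N) : ℝ) < (N : ℝ) + 2 * s := by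
    rw [finrank_euclideanSpace_fin]; linarith
  have hmaj : Integrable (fun w : Rn N => (2:ℝ) ^ ((N : ℝ) + 2 * s) * (1 + ‖w‖) ^ (-((N : ℝ) + 2 * s))) :=
    (integrable_one_add_norm hdim).const_mul _
  refine hmaj.mono' ?_ ?_
  · refine (Measurable.ite ?_ ?_ measurable_const).aestronglyMeasurable
    · exact measurableSet_lt measurable_const measurable_norm
    · exact measurable_norm.pow_const _
  · refine Filter.Eventually.of_forall fun w => ?_
    by_cases h : 1 < ‖w‖
    · rw [if_pos h]
      have hr : (0:ℝ) ≤ (N : ℝ) + 2 * s := by positivity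
      have h1 : (1 + ‖w‖) ^ ((N : ℝ) + 2 * s) ≤ (2 * ‖w‖) ^ ((N : ℝ) + 2 * s) := by
        apply Real.rpow_le_rpow (by positivity) (by linarith) hr
      have hw0 : (0:ℝ) < ‖w‖ := by linarith
      have h2 : (2 * ‖w‖) ^ ((N : ℝ) + 2 * s) = 2 ^ ((N : ℝ) + 2 * s) * ‖w‖ ^ ((N : ℝ) + 2 * s) :=
        Real.mul_rpow (by norm_num) hw0.le
      rw [Real.norm_eq_abs, abs_of_nonneg (Real.rpow_nonneg hw0.le _),
        Real.rpow_neg hw0.le, Real.rpow_neg (by positivity : (0:ℝ) ≤ 1 + ‖w‖)]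
      set A := ‖w‖ ^ ((N : ℝ) + 2 * s) with hA
      set Bq := (1 + ‖w‖) ^ ((N : ℝ) + 2 * s) with hB
      set c := (2:ℝ) ^ ((N : ℝ) + 2 * s) with hc
      have hApos : 0 < A := Real.rpow_pos_of_pos hw0 _
      have hBpos : 0 < Bq := Real.rpow_pos_of_pos (by positivity) _
      have hcpos : 0 < c := Real.rpow_pos_of_pos (by norm_num) _
      have h3 : Bq ≤ c * A := by rw [hc, hA, ← Real.mul_rpow (by norm_num) hw0.le]; exact h1
      have h4 : (c * A)⁻¹ ≤ Bq⁻¹ := by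
        apply inv_anti₀ hBpos h3
      calc A⁻¹ = c * (c * A)⁻¹ := by field_simp
        _ ≤ c * Bq⁻¹ := mul_le_mul_of_nonneg_left h4 hcpos.le
    · rw [if_neg h, Real.norm_eq_abs, abs_zero]
      positivity

end Aux

set_option maxHeartbeats 2000000 in
/-- the estimate on the region
`D = {(x,y) ∈ (B₄ × ∁B₃) ∪ (∁B₃ × B₄) : |x−y| > 1}`. -/
theorem stmt12 (N : ℕ) (s : ℝ) (hN : 2 ≤ N) (hs0 : 0 < s) (hs1 : s < 1)
    (hNs : 2 * s < N) :
    ∃ C : ℝ, 0 < C ∧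
      ∀ δ ε : ℝ, δ ∈ Set.Ioc (0 : ℝ) (1 / 20) → ε ∈ Set.Ioc (0 : ℝ) (1 / 20) →
        ∀ z : Rn N, ‖z‖ ≤ 1 →
          ∀ φ : Rn N → ℝ, IsCutoff N δ φ →
            (∫ p in {p : Rn N × Rn N |
                  ((‖p.1‖ ≤ 4 ∧ ¬ ‖p.2‖ ≤ 3) ∨ (¬ ‖p.1‖ ≤ 3 ∧ ‖p.2‖ ≤ 4)) ∧
                    1 < ‖p.1 - p.2‖},
                ((φ p.1 * bubble N s ε z p.1 - φ p.2 * bubble N s ε z p.2) ^ 2 -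
                    (bubble N s ε z p.1 - bubble N s ε z p.2) ^ 2) /
                  ‖p.1 - p.2‖ ^ ((N : ℝ) + 2 * s)) ≤
              C * ε ^ ((N : ℝ) - 2 * s) := by
  classical
  have hN0 : (0:ℝ) < N := by exact_mod_cast (by omega : 0 < N)
  have hc0 : (0:ℝ) < ((N : ℝ) - 2 * s) / 2 := by linarith
  set b : Rn N → ℝ := fun w => if 1 < ‖w‖ then ‖w‖ ^ (-((N : ℝ) + 2 * s)) else 0 with hbdef
  have hbInt : Integrable b := aux_b_integrable N s hN hs0
  have hb0 : ∀ w, 0 ≤ b w := by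
    intro w; rw [hbdef]; dsimp only
    split
    · exact Real.rpow_nonneg (norm_nonneg _) _
    · exact le_refl 0
  set B : ℝ := ∫ w, b w with hBdef
  have hB0 : 0 ≤ B := integral_nonneg hb0
  set J : ℝ := ∫ r in Set.Ioc (0:ℝ) 5, r ^ (2*s - 1) with hJdef
  have hJ0 : 0 ≤ J :=
    setIntegral_nonneg measurableSet_Ioc fun r hr => Real.rpow_nonneg hr.1.le _
  set vol1 : ℝ := (volume (Metric.ball (0 : Rn N) 1)).toReal with hvoldef
  have hvol0 : 0 ≤ vol1 := ENNReal.toReal_nonneg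
  set A2 : ℝ := (N:ℝ) * vol1 * J with hA2def
  have hA20 : 0 ≤ A2 := by positivity
  refine ⟨4 * A2 * B + 1, by positivity, ?_⟩
  intro δ ε hδ hε z hz φ hφ
  obtain ⟨hε0, hε1⟩ := hε
  set εp : ℝ := ε ^ (((N : ℝ) - 2 * s) / 2) with hεpdef
  have hεp0 : 0 ≤ εp := Real.rpow_nonneg hε0.le _
  set U : Rn N → ℝ := bubble N s ε z with hUdef
  have hU0 : ∀ x, 0 ≤ U x := fun x => Real.rpow_nonneg (by positivity) _
  have hUcont : Continuous U := by
    apply Continuous.rpow_const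
    · exact continuous_const.div
        (continuous_const.add (((continuous_id.sub continuous_const).norm).pow 2))
        (fun x => by positivity)
    · intro x; left
      have : (0:ℝ) < ε / (ε ^ 2 + ‖x - z‖ ^ 2) := by positivity
      exact ne_of_gt this
  have hUfar : ∀ y : Rn N, ¬ ‖y‖ ≤ 3 → U y ≤ εp := by
    intro y hy
    push_neg at hy
    have h1 : (2:ℝ) ≤ ‖y - z‖ := by
      have := norm_sub_norm_le y z
      linarith [norm_sub_norm_le y z]
    have hbase : ε / (ε ^ 2 + ‖y - z‖ ^ 2) ≤ ε := by
      apply div_le_self hε0.le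
      nlinarith
    exact Real.rpow_le_rpow (by positivity) hbase hc0.le
  set a : Rn N → ℝ := (Metric.closedBall z 5).indicator U with hadef
  have ha0 : ∀ x, 0 ≤ a x := fun x => Set.indicator_nonneg (fun y _ => hU0 y) x
  have haInt : Integrable a := by
    rw [hadef, integrable_indicator_iff measurableSet_closedBall]
    exact ContinuousOn.integrableOn_compact (isCompact_closedBall z 5) hUcont.continuousOn
  -- integrability of the two product pieces and values of their integrals
  have hHInt : Integrable (fun w : Rn N × Rn N => a w.1 * b w.2) := by
    rw [MeasureTheory.Measure.volume_eq_prod]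
    exact haInt.mul_prod hbInt
  have hHval : (∫ w : Rn N × Rn N, a w.1 * b w.2) = (∫ x, a x) * B := by
    rw [MeasureTheory.Measure.volume_eq_prod]
    exact integral_prod_mul a b
  have hT1 : MeasurePreserving (fun w : Rn N × Rn N => (w.1, w.2 - w.1)) volume volume := by
    rw [MeasureTheory.Measure.volume_eq_prod]
    exact measurePreserving_prod_sub volume volume
  have hT1e : MeasurableEmbedding (fun w : Rn N × Rn N => (w.1, w.2 - w.1)) :=
    (MeasurableEquiv.shearSubRight (Rn N)).measurableEmbedding
  have hT2 : MeasurePreserving (fun w : Rn N × Rn N => (w.2, w.1 - w.2)) volume volume := by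
    rw [MeasureTheory.Measure.volume_eq_prod]
    exact measurePreserving_prod_sub_swap volume volume
  have hT2e : MeasurableEmbedding (fun w : Rn N × Rn N => (w.2, w.1 - w.2)) := by
    have h := ((MeasurableEquiv.shearSubRight (Rn N)).measurableEmbedding).comp
      (MeasurableEquiv.prodComm (α := Rn N) (β := Rn N)).measurableEmbedding
    exact h
  have h1Int : Integrable (fun w : Rn N × Rn N => a w.1 * b (w.2 - w.1)) :=
    (hT1.integrable_comp_emb hT1e).2 hHInt
  have h2Int : Integrable (fun w : Rn N × Rn N => a w.2 * b (w.1 - w.2)) :=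
    (hT2.integrable_comp_emb hT2e).2 hHInt
  have h1val : (∫ w : Rn N × Rn N, a w.1 * b (w.2 - w.1)) = (∫ x, a x) * B := by
    rw [← hHval]
    exact hT1.integral_comp hT1e (fun w : Rn N × Rn N => a w.1 * b w.2)
  have h2val : (∫ w : Rn N × Rn N, a w.2 * b (w.1 - w.2)) = (∫ x, a x) * B := by
    rw [← hHval]
    exact hT2.integral_comp hT2e (fun w : Rn N × Rn N => a w.1 * b w.2)
  set g : Rn N × Rn N → ℝ :=
    fun w => 2 * εp * (a w.1 * b (w.2 - w.1) + a w.2 * b (w.1 - w.2)) with hgdef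
  have hgInt : Integrable g := (h1Int.add h2Int).const_mul _
  have hg0 : ∀ w, 0 ≤ g w := by
    intro w; rw [hgdef]; dsimp only
    have := ha0 w.1; have := ha0 w.2; have := hb0 (w.2 - w.1); have := hb0 (w.1 - w.2)
    positivity
  have hgval : (∫ w, g w) = 2 * εp * ((∫ x, a x) * B + (∫ x, a x) * B) := by
    simp only [hgdef]
    rw [integral_const_mul]
    rw [integral_add h1Int h2Int, h1val, h2val]
  -- bound on ∫ a
  have ha_nonneg_int : 0 ≤ ∫ x, a x := integral_nonneg ha0
  have hAbound : (∫ x, a x) ≤ A2 * εp := by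
    set g1 : ℝ → ℝ :=
      fun r => if r ≤ 5 then (ε / (ε ^ 2 + r ^ 2)) ^ (((N : ℝ) - 2 * s) / 2) else 0 with hg1def
    have hg10 : ∀ r, 0 ≤ g1 r := by
      intro r; rw [hg1def]; dsimp only; split
      · exact Real.rpow_nonneg (by positivity) _
      · exact le_refl 0
    have hstep1 : (∫ x, a x) = ∫ x : Rn N, g1 ‖x‖ := by
      have key : ∀ x : Rn N, a x = g1 ‖x - z‖ := by
        intro x
        rw [hadef]
        by_cases hx : x ∈ Metric.closedBall z 5
        · have h5 : ‖x - z‖ ≤ 5 := by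
            rwa [Metric.mem_closedBall, dist_eq_norm] at hx
          rw [Set.indicator_of_mem hx, hg1def]
          dsimp only
          rw [if_pos h5]
          rfl
        · have h5 : ¬ ‖x - z‖ ≤ 5 := by
            rw [Metric.mem_closedBall, dist_eq_norm] at hx
            exact hx
          rw [Set.indicator_of_notMem hx, hg1def]
          dsimp only
          rw [if_neg h5]
      calc (∫ x, a x) = ∫ x : Rn N, g1 ‖x - z‖ := by simp_rw [key]
        _ = ∫ x : Rn N, g1 ‖x‖ := integral_sub_right_eq_self (fun x : Rn N => g1 ‖x‖) z
    haveI : Nontrivial (Rn N) :=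
      Module.nontrivial_of_finrank_pos (R := ℝ)
        (by rw [finrank_euclideanSpace_fin]; omega : 0 < Module.finrank ℝ (Rn N))
    have hpolar := integral_fun_norm_addHaar (volume : Measure (Rn N)) g1
    rw [finrank_euclideanSpace_fin] at hpolar
    have hJb : (∫ r in Set.Ioi (0:ℝ), r ^ (N - 1) • g1 r) ≤ εp * J := by
      set M : ℝ → ℝ := (Set.Ioc (0:ℝ) 5).indicator (fun r => εp * r ^ (2*s-1)) with hMdef
      have hMInt : Integrable M := by
        rw [hMdef, integrable_indicator_iff measurableSet_Ioc]
        have h := (intervalIntegral.integrableOn_Ioo_rpow_iff (by norm_num : (0:ℝ) < 5)).2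
          (by linarith : (-1:ℝ) < 2*s-1)
        exact (h.congr_set_ae Ioo_ae_eq_Ioc.symm).const_mul εp
      have hg1meas : Measurable g1 := by
        rw [hg1def]
        refine Measurable.ite measurableSet_Iic ?_ measurable_const
        exact (measurable_const.div
          ((measurable_const.add (measurable_id.pow_const 2)))).pow measurable_const
      have hf1meas : Measurable (fun r : ℝ => r ^ (N - 1) • g1 r) :=
        (measurable_id.pow_const (N-1)).smul hg1meas
      have hf1le : ∀ r ∈ Set.Ioi (0:ℝ), r ^ (N - 1) • g1 r ≤ M r := by
        intro r hr
        rw [Set.mem_Ioi] at hr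
        rw [smul_eq_mul]
        by_cases hr5 : r ≤ 5
        · rw [hMdef, Set.indicator_of_mem (Set.mem_Ioc.mpr ⟨hr, hr5⟩), hg1def]
          dsimp only
          rw [if_pos hr5]
          have hb1 : (ε / (ε ^ 2 + r ^ 2)) ^ (((N : ℝ) - 2 * s) / 2)
              ≤ (ε / r ^ 2) ^ (((N : ℝ) - 2 * s) / 2) := by
            apply Real.rpow_le_rpow (by positivity) ?_ hc0.le
            apply div_le_div_of_nonneg_left hε0.le (by positivity) (by nlinarith)
          have heq : (r : ℝ) ^ (N - 1) * (ε / r ^ 2) ^ (((N : ℝ) - 2 * s) / 2)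
              = εp * r ^ (2*s-1) := by
            rw [Real.div_rpow hε0.le (by positivity), div_eq_mul_inv,
              ← Real.rpow_neg (by positivity), ← Real.rpow_natCast r 2,
              ← Real.rpow_mul hr.le, ← Real.rpow_natCast r (N - 1), mul_left_comm,
              ← Real.rpow_add hr, hεpdef]
            congr 1
            push_cast [Nat.cast_sub (by omega : 1 ≤ N)]
            ring
          calc (r:ℝ) ^ (N - 1) * (ε / (ε ^ 2 + r ^ 2)) ^ (((N : ℝ) - 2 * s) / 2)
              ≤ (r:ℝ) ^ (N - 1) * (ε / r ^ 2) ^ (((N : ℝ) - 2 * s) / 2) := by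
                apply mul_le_mul_of_nonneg_left hb1 (by positivity)
            _ = εp * r ^ (2*s-1) := heq
        · rw [hMdef, Set.indicator_of_notMem (by
            intro hmem
            exact hr5 hmem.2), hg1def]
          dsimp only
          rw [if_neg hr5, mul_zero]
      have hf1Int : IntegrableOn (fun r : ℝ => r ^ (N - 1) • g1 r) (Set.Ioi 0) := by
        refine Integrable.mono' hMInt.integrableOn
          (hf1meas.aestronglyMeasurable.restrict) ?_
        rw [ae_restrict_iff' measurableSet_Ioi]
        refine Filter.Eventually.of_forall fun r hr => ?_
        rw [Set.mem_Ioi] at hr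
        rw [Real.norm_eq_abs, abs_of_nonneg (by
          rw [smul_eq_mul]
          exact mul_nonneg (by positivity) (hg10 r))]
        exact hf1le r (Set.mem_Ioi.mpr hr)
      calc (∫ r in Set.Ioi (0:ℝ), r ^ (N - 1) • g1 r)
          ≤ ∫ r in Set.Ioi (0:ℝ), M r :=
            setIntegral_mono_on hf1Int hMInt.integrableOn measurableSet_Ioi hf1le
        _ = ∫ r in Set.Ioc (0:ℝ) 5, εp * r ^ (2*s-1) := by
            rw [hMdef, setIntegral_indicator measurableSet_Ioc,
              Set.inter_eq_right.mpr (fun r hr => hr.1)]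
        _ = εp * J := by rw [hJdef, integral_const_mul]
    calc (∫ x, a x) = ∫ x : Rn N, g1 ‖x‖ := hstep1
      _ = N • vol1 • ∫ r in Set.Ioi (0:ℝ), r ^ (N - 1) • g1 r := hpolar
      _ = (N:ℝ) * vol1 * ∫ r in Set.Ioi (0:ℝ), r ^ (N - 1) • g1 r := by
          rw [nsmul_eq_mul, smul_eq_mul]; ring
      _ ≤ (N:ℝ) * vol1 * (εp * J) := by
          apply mul_le_mul_of_nonneg_left hJb (by positivity)
      _ = A2 * εp := by rw [hA2def]; ring
  -- pointwise claim on the region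
  set Dset : Set (Rn N × Rn N) := {p : Rn N × Rn N |
    ((‖p.1‖ ≤ 4 ∧ ¬ ‖p.2‖ ≤ 3) ∨ (¬ ‖p.1‖ ≤ 3 ∧ ‖p.2‖ ≤ 4)) ∧ 1 < ‖p.1 - p.2‖} with hDdef
  set F : Rn N × Rn N → ℝ := fun p =>
    ((φ p.1 * U p.1 - φ p.2 * U p.2) ^ 2 - (U p.1 - U p.2) ^ 2) /
      ‖p.1 - p.2‖ ^ ((N : ℝ) + 2 * s) with hFdef
  have hDmeas : MeasurableSet Dset := by
    have hrw : Dset = (({p : Rn N × Rn N | ‖p.1‖ ≤ 4} ∩ {p : Rn N × Rn N | ‖p.2‖ ≤ 3}ᶜ)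
        ∪ ({p : Rn N × Rn N | ‖p.1‖ ≤ 3}ᶜ ∩ {p : Rn N × Rn N | ‖p.2‖ ≤ 4}))
        ∩ {p : Rn N × Rn N | 1 < ‖p.1 - p.2‖} := by
      ext p
      simp only [hDdef, Set.mem_setOf_eq, Set.mem_inter_iff, Set.mem_union, Set.mem_compl_iff]
    rw [hrw]
    exact (((measurableSet_le measurable_fst.norm measurable_const).inter
      (measurableSet_le measurable_snd.norm measurable_const).compl).union
      ((measurableSet_le measurable_fst.norm measurable_const).compl.inter
      (measurableSet_le measurable_snd.norm measurable_const))).inter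
      (measurableSet_lt measurable_const (measurable_fst.sub measurable_snd).norm)
  have hclaim : ∀ w ∈ Dset, F w ≤ g w := by
    rintro ⟨x, y⟩ ⟨hcase, hdist⟩
    have hxy0 : (0:ℝ) < ‖x - y‖ := by linarith
    have hK0 : 0 < ‖x - y‖ ^ ((N : ℝ) + 2 * s) := Real.rpow_pos_of_pos hxy0 _
    have hbxy : b (x - y) = (‖x - y‖ ^ ((N : ℝ) + 2 * s))⁻¹ := by
      rw [hbdef]; dsimp only
      rw [if_pos hdist, Real.rpow_neg (norm_nonneg _)]
    have hbyx : b (y - x) = (‖x - y‖ ^ ((N : ℝ) + 2 * s))⁻¹ := by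
      rw [hbdef]; dsimp only
      rw [norm_sub_rev, if_pos hdist, Real.rpow_neg (norm_nonneg _)]
    have hnum := aux_num (φ x) (φ y) (U x) (U y) (hφ.mem01 x).1 (hφ.mem01 x).2
      (hφ.mem01 y).1 (hφ.mem01 y).2 (hU0 x) (hU0 y)
    have hF1 : F (x, y) ≤ 2 * (U x * U y) * (‖x - y‖ ^ ((N : ℝ) + 2 * s))⁻¹ := by
      rw [hFdef]; dsimp only
      rw [div_eq_mul_inv]
      exact mul_le_mul_of_nonneg_right hnum (by positivity)
    refine le_trans hF1 ?_
    rw [hgdef]; dsimp only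
    rw [hbxy, hbyx]
    set Ki : ℝ := (‖x - y‖ ^ ((N : ℝ) + 2 * s))⁻¹ with hKidef
    have hKi0 : 0 ≤ Ki := by positivity
    rcases hcase with ⟨hx4, hy3⟩ | ⟨hx3, hy4⟩
    · have hax : a x = U x := by
        rw [hadef]
        apply Set.indicator_of_mem
        rw [Metric.mem_closedBall, dist_eq_norm]
        calc ‖x - z‖ ≤ ‖x‖ + ‖z‖ := norm_sub_le x z
          _ ≤ 5 := by linarith
      have hUy : U y ≤ εp := hUfar y hy3
      have h1 : U x * U y ≤ U x * εp := mul_le_mul_of_nonneg_left hUy (hU0 x)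
      have h2 := mul_le_mul_of_nonneg_right h1 hKi0
      have h3 : 0 ≤ εp * (a y * Ki) := by
        exact mul_nonneg hεp0 (mul_nonneg (ha0 y) hKi0)
      rw [hax]
      nlinarith [h2, h3]
    · have hay : a y = U y := by
        rw [hadef]
        apply Set.indicator_of_mem
        rw [Metric.mem_closedBall, dist_eq_norm]
        calc ‖y - z‖ ≤ ‖y‖ + ‖z‖ := norm_sub_le y z
          _ ≤ 5 := by linarith
      have hUx : U x ≤ εp := hUfar x hx3
      have h1 : U x * U y ≤ εp * U y := mul_le_mul_of_nonneg_right hUx (hU0 y)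
      have h2 := mul_le_mul_of_nonneg_right h1 hKi0
      have h3 : 0 ≤ εp * (a x * Ki) := by
        exact mul_nonneg hεp0 (mul_nonneg (ha0 x) hKi0)
      rw [hay]
      nlinarith [h2, h3]
  have hε2 : εp * εp = ε ^ ((N : ℝ) - 2 * s) := by
    rw [hεpdef, ← Real.rpow_add hε0]
    congr 1
    ring
  by_cases hFi : IntegrableOn F Dset
  · calc (∫ p in Dset, F p) ≤ ∫ p in Dset, g p :=
        setIntegral_mono_on hFi hgInt.integrableOn hDmeas hclaim
      _ ≤ ∫ p, g p := setIntegral_le_integral hgInt (Filter.Eventually.of_forall hg0)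
      _ = 2 * εp * ((∫ x, a x) * B + (∫ x, a x) * B) := hgval
      _ ≤ 2 * εp * ((A2 * εp) * B + (A2 * εp) * B) := by
          have h4 : (∫ x, a x) * B ≤ (A2 * εp) * B := mul_le_mul_of_nonneg_right hAbound hB0
          have h5 : 0 ≤ 2 * εp := by positivity
          nlinarith [mul_le_mul_of_nonneg_left (add_le_add h4 h4) h5]
      _ = (4 * A2 * B) * (εp * εp) := by ring
      _ = (4 * A2 * B) * ε ^ ((N : ℝ) - 2 * s) := by rw [hε2]
      _ ≤ (4 * A2 * B + 1) * ε ^ ((N : ℝ) - 2 * s) := by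
          have h6 : (0:ℝ) ≤ ε ^ ((N : ℝ) - 2 * s) := Real.rpow_nonneg hε0.le _
          nlinarith
  · rw [integral_undef hFi]
    positivity
end

section
/- Let D̃ = {(x,y) ∈ (B_{4δ} × (B₄∖B_{4δ})) ∪ ((B₄∖B_{4δ}) × B_{4δ}) : |x−y| > δ}. There exists C > 0, depending only on N and s, such that for every δ, ε ∈ (0,1/20], every z ∈ B₁, and every admissible cutoff φ_δ, one has ∬_{D̃} [ |u_{δ,ε,z}(x) − u_{δ,ε,z}(y)|² − |U_{ε,z}(x) − U_{ε,z}(y)|² ] / |x−y|^{N+2s} dx dy ≤ C (δ/ε)^{N−2s}. -/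
open MeasureTheory Filter Set

private lemma aux_num_le {fx fy Ux Uy M : ℝ} (hfx0 : 0 ≤ fx) (hfx1 : fx ≤ 1)
    (hfy0 : 0 ≤ fy) (hfy1 : fy ≤ 1) (hUx0 : 0 ≤ Ux) (hUy0 : 0 ≤ Uy)
    (hUx : Ux ≤ M) (hUy : Uy ≤ M) :
    (fx * Ux - fy * Uy) ^ 2 - (Ux - Uy) ^ 2 ≤ 2 * (M * M) := by
  have h1 : 0 ≤ (1 - fx ^ 2) * Ux ^ 2 := mul_nonneg (by nlinarith) (sq_nonneg Ux)
  have h2 : 0 ≤ (1 - fy ^ 2) * Uy ^ 2 := mul_nonneg (by nlinarith) (sq_nonneg Uy)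
  have h3 : 0 ≤ fx * fy * (Ux * Uy) :=
    mul_nonneg (mul_nonneg hfx0 hfy0) (mul_nonneg hUx0 hUy0)
  have h4 : Ux * Uy ≤ M * M := mul_le_mul hUx hUy hUy0 (hUx0.trans hUx)
  nlinarith [h1, h2, h3, h4]

private lemma aux_num_abs_le {fx fy Ux Uy M : ℝ} (hfx0 : 0 ≤ fx) (hfx1 : fx ≤ 1)
    (hfy0 : 0 ≤ fy) (hfy1 : fy ≤ 1) (hUx0 : 0 ≤ Ux) (hUy0 : 0 ≤ Uy)
    (hUx : Ux ≤ M) (hUy : Uy ≤ M) :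
    |(fx * Ux - fy * Uy) ^ 2 - (Ux - Uy) ^ 2| ≤ 8 * (M * M) := by
  have hA : (fx * Ux - fy * Uy) ^ 2 ≤ (Ux + Uy) ^ 2 := by
    apply sq_le_sq' <;> nlinarith
  have hB : (Ux - Uy) ^ 2 ≤ (Ux + Uy) ^ 2 := by
    apply sq_le_sq' <;> nlinarith
  have hAB : (Ux + Uy) ^ 2 ≤ 4 * (M * M) := by nlinarith
  rw [abs_le]
  constructor <;> nlinarith [sq_nonneg (fx * Ux - fy * Uy), sq_nonneg (Ux - Uy)]

private lemma aux_indicator_integrable (N : ℕ) {b : ℝ} (hb : (N : ℝ) < b) {δ : ℝ} (hδ : 0 < δ) :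
    Integrable (Set.indicator {w : Rn N | δ < ‖w‖} (fun w => ‖w‖ ^ (-b)))
      (volume : Measure (Rn N)) := by
  have hb0 : (0:ℝ) ≤ b := le_trans (Nat.cast_nonneg N) hb.le
  have hmeas : Measurable (Set.indicator {w : Rn N | δ < ‖w‖} (fun w : Rn N => ‖w‖ ^ (-b))) := by
    have h1 : (fun w : Rn N => ‖w‖ ^ (-b)) = fun w : Rn N => (‖w‖ ^ b)⁻¹ := by
      funext w; rw [Real.rpow_neg (norm_nonneg w)]
    have h2 : Measurable fun w : Rn N => ‖w‖ ^ b :=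
      (Real.continuous_rpow_const hb0).measurable.comp measurable_norm
    exact Measurable.indicator (h1 ▸ h2.inv)
      (measurableSet_lt measurable_const measurable_norm)
  have hintg : Integrable (fun w : Rn N => (1 + δ⁻¹) ^ b * (1 + ‖w‖) ^ (-b)) volume := by
    apply Integrable.const_mul
    apply integrable_one_add_norm
    rwa [finrank_euclideanSpace_fin]
  refine hintg.mono' hmeas.aestronglyMeasurable ?_
  filter_upwards with w
  by_cases h : w ∈ {w : Rn N | δ < ‖w‖}
  · rw [Set.indicator_of_mem h]
    have hw : δ < ‖w‖ := h
    have hw0 : (0:ℝ) < ‖w‖ := hδ.trans hw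
    rw [Real.norm_eq_abs, abs_of_nonneg (Real.rpow_nonneg (norm_nonneg w) _)]
    have key : (1 + ‖w‖) ^ b ≤ (1 + δ⁻¹) ^ b * ‖w‖ ^ b := by
      rw [← Real.mul_rpow (by positivity) (norm_nonneg w)]
      apply Real.rpow_le_rpow (by positivity) ?_ hb0
      have h1 : 1 ≤ δ⁻¹ * ‖w‖ := by
        rw [← div_eq_inv_mul]
        exact (one_le_div hδ).2 hw.le
      nlinarith [h1]
    have hP : (0:ℝ) < ‖w‖ ^ b := Real.rpow_pos_of_pos hw0 b
    have hQ : (0:ℝ) < (1 + ‖w‖) ^ b := Real.rpow_pos_of_pos (by positivity) b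
    rw [Real.rpow_neg (norm_nonneg w),
      Real.rpow_neg (by positivity : (0:ℝ) ≤ 1 + ‖w‖)]
    calc (‖w‖ ^ b)⁻¹ = 1 / ‖w‖ ^ b := (one_div _).symm
      _ ≤ (1 + δ⁻¹) ^ b / (1 + ‖w‖) ^ b := by
          rw [div_le_div_iff₀ hP hQ]; nlinarith [key]
      _ = (1 + δ⁻¹) ^ b * ((1 + ‖w‖) ^ b)⁻¹ := by rw [div_eq_mul_inv]
  · rw [Set.indicator_of_notMem h, norm_zero]
    positivity

private lemma aux_indicator_integral (N : ℕ) {b δ : ℝ} (hδ : 0 < δ) :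
    ∫ w : Rn N, Set.indicator {w : Rn N | δ < ‖w‖} (fun w => ‖w‖ ^ (-b)) w =
      δ ^ ((N : ℝ) - b) *
        ∫ w : Rn N, Set.indicator {w : Rn N | 1 < ‖w‖} (fun w => ‖w‖ ^ (-b)) w := by
  have h1 : ∀ v : Rn N,
      Set.indicator {w : Rn N | δ < ‖w‖} (fun w => ‖w‖ ^ (-b)) (δ • v) =
        δ ^ (-b) * Set.indicator {w : Rn N | 1 < ‖w‖} (fun w => ‖w‖ ^ (-b)) v := by
    intro v
    have hn : ‖δ • v‖ = δ * ‖v‖ := by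
      rw [norm_smul, Real.norm_eq_abs, abs_of_pos hδ]
    by_cases h : v ∈ {w : Rn N | 1 < ‖w‖}
    · have h' : 1 < ‖v‖ := h
      have hmem : δ • v ∈ {w : Rn N | δ < ‖w‖} := by
        show δ < ‖δ • v‖
        rw [hn]; exact (lt_mul_iff_one_lt_right hδ).2 h'
      rw [Set.indicator_of_mem hmem, Set.indicator_of_mem h, hn,
        Real.mul_rpow hδ.le (norm_nonneg v)]
    · have h' : ¬ 1 < ‖v‖ := h
      have hmem : δ • v ∉ {w : Rn N | δ < ‖w‖} := by
        show ¬ δ < ‖δ • v‖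
        rw [hn, not_lt]
        exact (mul_le_iff_le_one_right hδ).2 (not_lt.1 h')
      rw [Set.indicator_of_notMem hmem, Set.indicator_of_notMem h, mul_zero]
  have h2 := Measure.integral_comp_smul (volume : Measure (Rn N))
      (Set.indicator {w : Rn N | δ < ‖w‖} (fun w => ‖w‖ ^ (-b))) δ
  simp only [h1] at h2
  rw [integral_const_mul, finrank_euclideanSpace_fin, smul_eq_mul,
    abs_of_pos (by positivity : (0:ℝ) < (δ ^ N)⁻¹)] at h2
  have hδN : (0:ℝ) < δ ^ N := pow_pos hδ N
  have h3 : ∫ w : Rn N, Set.indicator {w : Rn N | δ < ‖w‖} (fun w => ‖w‖ ^ (-b)) w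
      = δ ^ N * (δ ^ (-b) *
        ∫ w : Rn N, Set.indicator {w : Rn N | 1 < ‖w‖} (fun w => ‖w‖ ^ (-b)) w) := by
    rw [h2]; field_simp
  rw [h3, ← Real.rpow_natCast δ N, ← mul_assoc, ← Real.rpow_add hδ, ← sub_eq_add_neg]

private lemma aux_S1 (N : ℕ) {b c δ r : ℝ} (hb : (N : ℝ) < b) (hδ : 0 < δ) :
    Integrable (Set.indicator {p : Rn N × Rn N | ‖p.1‖ ≤ r ∧ δ < ‖p.1 - p.2‖}
      (fun p => c * Set.indicator {w : Rn N | δ < ‖w‖} (fun w => ‖w‖ ^ (-b)) (p.1 - p.2)))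
      (volume : Measure (Rn N × Rn N)) ∧
    ∫ p : Rn N × Rn N, Set.indicator {p : Rn N × Rn N | ‖p.1‖ ≤ r ∧ δ < ‖p.1 - p.2‖}
      (fun p => c * Set.indicator {w : Rn N | δ < ‖w‖} (fun w => ‖w‖ ^ (-b)) (p.1 - p.2)) p
      = (volume (Metric.closedBall (0 : Rn N) r)).toReal *
        (c * ∫ w : Rn N, Set.indicator {w : Rn N | δ < ‖w‖} (fun w => ‖w‖ ^ (-b)) w) := by
  set Fδ : Rn N → ℝ := Set.indicator {w : Rn N | δ < ‖w‖} (fun w : Rn N => ‖w‖ ^ (-b))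
    with hFδ
  have hFδ_int : Integrable Fδ (volume : Measure (Rn N)) := aux_indicator_integrable N hb hδ
  have hB_int : Integrable (Set.indicator (Metric.closedBall (0 : Rn N) r) (fun _ => (1:ℝ)))
      (volume : Measure (Rn N)) :=
    (integrable_indicator_iff measurableSet_closedBall).2
      (integrableOn_const measure_closedBall_lt_top.ne (by simp))
  have hH_int : Integrable (fun q : Rn N × Rn N =>
      Set.indicator (Metric.closedBall (0 : Rn N) r) (fun _ => (1:ℝ)) q.1 * (c * Fδ q.2))
      (volume : Measure (Rn N × Rn N)) := by
    rw [Measure.volume_eq_prod]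
    exact hB_int.mul_prod (hFδ_int.const_mul c)
  have hTm : Measurable (fun p : Rn N × Rn N => (p.1, p.1 - p.2)) :=
    measurable_fst.prodMk (measurable_fst.sub measurable_snd)
  let Teq : (Rn N × Rn N) ≃ᵐ (Rn N × Rn N) :=
    ⟨⟨fun p => (p.1, p.1 - p.2), fun p => (p.1, p.1 - p.2),
      fun p => by simp, fun p => by simp⟩, hTm, hTm⟩
  have hTemb : MeasurableEmbedding (fun p : Rn N × Rn N => (p.1, p.1 - p.2)) :=
    Teq.measurableEmbedding
  have hTmp : MeasurePreserving (fun p : Rn N × Rn N => (p.1, p.1 - p.2))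
      (volume : Measure (Rn N × Rn N)) (volume : Measure (Rn N × Rn N)) := by
    rw [Measure.volume_eq_prod]
    have h1 : MeasurePreserving (fun p : Rn N × Rn N => (p.1, -p.2))
        ((volume : Measure (Rn N)).prod volume) ((volume : Measure (Rn N)).prod volume) :=
      (MeasurePreserving.id volume).prod (Measure.measurePreserving_neg volume)
    have h2 := measurePreserving_prod_add (volume : Measure (Rn N)) volume
    have h3 := h2.comp h1
    convert h3 using 1
    rfl
    rfl
    funext p
    simp [sub_eq_add_neg]
  have hcomp : Set.indicator {p : Rn N × Rn N | ‖p.1‖ ≤ r ∧ δ < ‖p.1 - p.2‖}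
      (fun p => c * Fδ (p.1 - p.2))
      = fun p : Rn N × Rn N =>
        (fun q : Rn N × Rn N =>
          Set.indicator (Metric.closedBall (0 : Rn N) r) (fun _ => (1:ℝ)) q.1 * (c * Fδ q.2))
          ((fun p : Rn N × Rn N => (p.1, p.1 - p.2)) p) := by
    funext p
    simp only [Set.indicator_apply, Set.mem_setOf_eq, Metric.mem_closedBall, dist_zero_right, hFδ]
    by_cases h1 : ‖p.1‖ ≤ r <;> by_cases h2 : δ < ‖p.1 - p.2‖ <;>
      simp [h1, h2]
  rw [hcomp]
  constructor
  · exact (hTmp.integrable_comp_emb hTemb).2 hH_int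
  · rw [hTmp.integral_comp hTemb
      (fun q : Rn N × Rn N =>
        Set.indicator (Metric.closedBall (0 : Rn N) r) (fun _ => (1:ℝ)) q.1 * (c * Fδ q.2)),
      Measure.volume_eq_prod,
      integral_prod_mul (Set.indicator (Metric.closedBall (0 : Rn N) r) (fun _ => (1:ℝ)))
        (fun y => c * Fδ y),
      integral_indicator_const _ measurableSet_closedBall,
      integral_const_mul, smul_eq_mul, mul_one, measureReal_def]

/-- the estimate on the region
`D̃ = {(x,y) ∈ (B_{4δ} × (B₄∖B_{4δ})) ∪ ((B₄∖B_{4δ}) × B_{4δ}) : |x−y| > δ}`. -/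
theorem stmt14 (N : ℕ) (s : ℝ) (hN : 2 ≤ N) (hs0 : 0 < s) (hs1 : s < 1)
    (hNs : 2 * s < N) :
    ∃ C : ℝ, 0 < C ∧
      ∀ δ ε : ℝ, δ ∈ Set.Ioc (0 : ℝ) (1 / 20) → ε ∈ Set.Ioc (0 : ℝ) (1 / 20) →
        ∀ z : Rn N, ‖z‖ ≤ 1 →
          ∀ φ : Rn N → ℝ, IsCutoff N δ φ →
            (∫ p in {p : Rn N × Rn N |
                  ((‖p.1‖ ≤ 4 * δ ∧ (‖p.2‖ ≤ 4 ∧ ¬ ‖p.2‖ ≤ 4 * δ)) ∨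
                    ((‖p.1‖ ≤ 4 ∧ ¬ ‖p.1‖ ≤ 4 * δ) ∧ ‖p.2‖ ≤ 4 * δ)) ∧
                    δ < ‖p.1 - p.2‖},
                ((φ p.1 * bubble N s ε z p.1 - φ p.2 * bubble N s ε z p.2) ^ 2 -
                    (bubble N s ε z p.1 - bubble N s ε z p.2) ^ 2) /
                  ‖p.1 - p.2‖ ^ ((N : ℝ) + 2 * s)) ≤
              C * (δ / ε) ^ ((N : ℝ) - 2 * s) := by
  have hN2 : (2:ℝ) ≤ (N:ℝ) := by exact_mod_cast hN
  set a : ℝ := (N : ℝ) - 2 * s with ha_def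
  set b : ℝ := (N : ℝ) + 2 * s with hb_def
  have ha0 : 0 < a := by rw [ha_def]; linarith
  have hb0 : 0 < b := by rw [hb_def]; linarith
  have hbN : (N : ℝ) < b := by rw [hb_def]; linarith
  set K : ℝ := ∫ w : Rn N, Set.indicator {w : Rn N | 1 < ‖w‖} (fun w => ‖w‖ ^ (-b)) w
    with hK_def
  have hK0 : 0 ≤ K := integral_nonneg fun w =>
    Set.indicator_nonneg (fun x _ => Real.rpow_nonneg (norm_nonneg x) _) w
  set V : ℝ := (volume (Metric.ball (0 : Rn N) 1)).toReal with hV_def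
  have hV0 : 0 ≤ V := ENNReal.toReal_nonneg
  refine ⟨4 * 4 ^ N * V * K + 1, by positivity, ?_⟩
  rintro δ ε ⟨hδ0, hδle⟩ ⟨hε0, hεle⟩ z hz φ hφ
  -- basic bounds on the bubble and the cutoff
  set m : ℝ := ε ^ (-(a / 2)) with hm_def
  have hm0 : 0 ≤ m := Real.rpow_nonneg hε0.le _
  have hmm : m * m = ε ^ (-a) := by
    rw [hm_def, ← Real.rpow_add hε0]
    congr 1
    ring
  have hbub0 : ∀ x : Rn N, 0 ≤ bubble N s ε z x := fun x =>
    Real.rpow_nonneg (div_nonneg hε0.le (by positivity)) _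
  have hbubM : ∀ x : Rn N, bubble N s ε z x ≤ m := by
    intro x
    have hbase : ε / (ε ^ 2 + ‖x - z‖ ^ 2) ≤ ε⁻¹ := by
      have h1 : ε / (ε ^ 2 + ‖x - z‖ ^ 2) ≤ ε / ε ^ 2 :=
        div_le_div_of_nonneg_left hε0.le (by positivity) (by nlinarith [sq_nonneg ‖x - z‖])
      calc ε / (ε ^ 2 + ‖x - z‖ ^ 2) ≤ ε / ε ^ 2 := h1
        _ = ε⁻¹ := by rw [sq]; field_simp
    calc bubble N s ε z x = (ε / (ε ^ 2 + ‖x - z‖ ^ 2)) ^ (a / 2) := rfl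
      _ ≤ ε⁻¹ ^ (a / 2) :=
          Real.rpow_le_rpow (div_nonneg hε0.le (by positivity)) hbase (by positivity)
      _ = m := by rw [hm_def, Real.inv_rpow hε0.le, ← Real.rpow_neg hε0.le]
  -- the dominating function
  set Fδ : Rn N → ℝ := Set.indicator {w : Rn N | δ < ‖w‖} (fun w : Rn N => ‖w‖ ^ (-b))
    with hFδ_def
  have hFδ0 : ∀ w, 0 ≤ Fδ w := fun w =>
    Set.indicator_nonneg (fun x _ => Real.rpow_nonneg (norm_nonneg x) _) w
  set c : ℝ := 2 * (m * m) with hc_def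
  have hc0 : 0 ≤ c := by rw [hc_def]; positivity
  set g : Rn N × Rn N → ℝ := fun p => c * Fδ (p.1 - p.2) with hg_def
  have hg0 : ∀ p, 0 ≤ g p := fun p => mul_nonneg hc0 (hFδ0 _)
  set S1 : Set (Rn N × Rn N) := {p : Rn N × Rn N | ‖p.1‖ ≤ 4 * δ ∧ δ < ‖p.1 - p.2‖}
    with hS1_def
  set S2 : Set (Rn N × Rn N) := {p : Rn N × Rn N | ‖p.2‖ ≤ 4 * δ ∧ δ < ‖p.1 - p.2‖}
    with hS2_def
  set D : Set (Rn N × Rn N) := {p : Rn N × Rn N |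
      ((‖p.1‖ ≤ 4 * δ ∧ (‖p.2‖ ≤ 4 ∧ ¬ ‖p.2‖ ≤ 4 * δ)) ∨
        ((‖p.1‖ ≤ 4 ∧ ¬ ‖p.1‖ ≤ 4 * δ) ∧ ‖p.2‖ ≤ 4 * δ)) ∧
        δ < ‖p.1 - p.2‖} with hD_def
  -- measurability of the sets
  have hnorm12 : Measurable fun p : Rn N × Rn N => ‖p.1 - p.2‖ :=
    (measurable_fst.sub measurable_snd).norm
  have hS1m : MeasurableSet S1 := by
    rw [hS1_def]
    exact (measurableSet_le measurable_fst.norm measurable_const).inter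
      (measurableSet_lt measurable_const hnorm12)
  have hS2m : MeasurableSet S2 := by
    rw [hS2_def]
    exact (measurableSet_le measurable_snd.norm measurable_const).inter
      (measurableSet_lt measurable_const hnorm12)
  have hDm : MeasurableSet D := by
    rw [hD_def]
    exact (((measurableSet_le measurable_fst.norm measurable_const).inter
      ((measurableSet_le measurable_snd.norm measurable_const).inter
        (measurableSet_le measurable_snd.norm measurable_const).compl)).union
      (((measurableSet_le measurable_fst.norm measurable_const).inter
        (measurableSet_le measurable_fst.norm measurable_const).compl).inter
        (measurableSet_le measurable_snd.norm measurable_const))).inter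
      (measurableSet_lt measurable_const hnorm12)
  -- measurability of the integrand
  have hφm : Measurable φ := hφ.smooth.continuous.measurable
  have hbubm : Measurable (bubble N s ε z) := by
    have heq : bubble N s ε z =
        (fun t : ℝ => t ^ (((N : ℝ) - 2 * s) / 2)) ∘
          (fun x : Rn N => ε / (ε ^ 2 + ‖x - z‖ ^ 2)) := rfl
    rw [heq]
    apply (Real.continuous_rpow_const (by positivity : (0:ℝ) ≤ ((N : ℝ) - 2 * s) / 2)).measurable.comp
    exact measurable_const.div
      (measurable_const.add (((measurable_id.sub measurable_const).norm).pow_const 2))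
  have hfm : Measurable (fun p : Rn N × Rn N =>
      ((φ p.1 * bubble N s ε z p.1 - φ p.2 * bubble N s ε z p.2) ^ 2 -
        (bubble N s ε z p.1 - bubble N s ε z p.2) ^ 2) / ‖p.1 - p.2‖ ^ b) := by
    apply Measurable.div
    · apply Measurable.sub
      · exact (((hφm.comp measurable_fst).mul (hbubm.comp measurable_fst)).sub
          ((hφm.comp measurable_snd).mul (hbubm.comp measurable_snd))).pow_const 2
      · exact ((hbubm.comp measurable_fst).sub (hbubm.comp measurable_snd)).pow_const 2
    · exact (Real.continuous_rpow_const hb0.le).measurable.comp hnorm12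
  -- D has finite measure
  have hDsub44 : D ⊆ Metric.closedBall (0 : Rn N) 4 ×ˢ Metric.closedBall (0 : Rn N) 4 := by
    rintro ⟨x, y⟩ ⟨hmem, -⟩
    have hδ4 : 4 * δ ≤ 4 := by linarith
    simp only [Set.mem_prod, Metric.mem_closedBall, dist_zero_right]
    rcases hmem with ⟨h1, h2, -⟩ | ⟨⟨h1, -⟩, h2⟩ <;> exact ⟨by linarith, by linarith⟩
  have hDfin : volume D ≠ ⊤ := by
    apply ne_of_lt
    calc volume D ≤ volume (Metric.closedBall (0 : Rn N) 4 ×ˢ Metric.closedBall (0 : Rn N) 4) :=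
          measure_mono hDsub44
      _ < ⊤ := by
          rw [Measure.volume_eq_prod, Measure.prod_prod]
          exact ENNReal.mul_lt_top measure_closedBall_lt_top measure_closedBall_lt_top
  -- integrability of the integrand on D
  have hfb : IntegrableOn (fun p : Rn N × Rn N =>
      ((φ p.1 * bubble N s ε z p.1 - φ p.2 * bubble N s ε z p.2) ^ 2 -
        (bubble N s ε z p.1 - bubble N s ε z p.2) ^ 2) / ‖p.1 - p.2‖ ^ b) D volume := by
    apply Measure.integrableOn_of_bounded (M := 8 * (m * m) / δ ^ b) hDfin
      hfm.aestronglyMeasurable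
    filter_upwards [ae_restrict_mem hDm] with p hp
    have hd : δ < ‖p.1 - p.2‖ := hp.2
    have hden : 0 < ‖p.1 - p.2‖ ^ b := Real.rpow_pos_of_pos (hδ0.trans hd) b
    have hdenδ : δ ^ b ≤ ‖p.1 - p.2‖ ^ b := Real.rpow_le_rpow hδ0.le hd.le hb0.le
    rw [Real.norm_eq_abs, abs_div, abs_of_pos hden]
    exact div_le_div₀ (by positivity)
      (aux_num_abs_le (hφ.mem01 p.1).1 (hφ.mem01 p.1).2 (hφ.mem01 p.2).1 (hφ.mem01 p.2).2
        (hbub0 p.1) (hbub0 p.2) (hbubM p.1) (hbubM p.2))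
      (Real.rpow_pos_of_pos hδ0 b) hdenδ
  -- integrability and value on S1
  obtain ⟨hIS1, hVS1⟩ := aux_S1 N (b := b) (c := c) (r := 4 * δ) hbN hδ0
  have hIS1' : Integrable (Set.indicator S1 g) (volume : Measure (Rn N × Rn N)) := hIS1
  have hgS1 : IntegrableOn g S1 volume := (integrable_indicator_iff hS1m).1 hIS1'
  -- symmetry between S1 and S2
  have hFsymm : ∀ x y : Rn N, Fδ (x - y) = Fδ (y - x) := by
    intro x y
    rw [hFδ_def]
    by_cases hxy : x - y ∈ {w : Rn N | δ < ‖w‖}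
    · have hyx : y - x ∈ {w : Rn N | δ < ‖w‖} := by
        show δ < ‖y - x‖
        rw [norm_sub_rev]
        exact hxy
      rw [Set.indicator_of_mem hxy, Set.indicator_of_mem hyx, norm_sub_rev]
    · have hyx : y - x ∉ {w : Rn N | δ < ‖w‖} := by
        show ¬ δ < ‖y - x‖
        rw [norm_sub_rev]
        exact hxy
      rw [Set.indicator_of_notMem hxy, Set.indicator_of_notMem hyx]
  have hswap : Set.indicator S2 g = (Set.indicator S1 g) ∘ Prod.swap := by
    funext p
    simp only [Function.comp_apply, Set.indicator_apply, hS1_def, hS2_def, hg_def,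
      Set.mem_setOf_eq, Prod.fst_swap, Prod.snd_swap]
    rw [hFsymm p.2 p.1, norm_sub_rev p.2 p.1]
  have hIS2' : Integrable (Set.indicator S2 g) (volume : Measure (Rn N × Rn N)) := by
    rw [hswap, Measure.volume_eq_prod]
    apply Integrable.swap
    rw [← Measure.volume_eq_prod]
    exact hIS1'
  have hgS2 : IntegrableOn g S2 volume := (integrable_indicator_iff hS2m).1 hIS2'
  have hVS2 : ∫ p : Rn N × Rn N, Set.indicator S2 g p =
      ∫ p : Rn N × Rn N, Set.indicator S1 g p := by
    rw [hswap]
    show ∫ p : Rn N × Rn N, Set.indicator S1 g p.swap = _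
    rw [Measure.volume_eq_prod]
    exact integral_prod_swap (Set.indicator S1 g)
  -- D is contained in S1 ∪ S2
  have hDsub : D ⊆ S1 ∪ S2 := by
    rintro p ⟨hmem, hd⟩
    rcases hmem with ⟨h1, -⟩ | ⟨-, h2⟩
    · exact Or.inl ⟨h1, hd⟩
    · exact Or.inr ⟨h2, hd⟩
  have hgU : IntegrableOn g (S1 ∪ S2) volume := hgS1.union hgS2
  have hgD : IntegrableOn g D volume := hgU.mono_set hDsub
  -- step 1 : pointwise comparison on D
  have step1 : (∫ p in D,
      ((φ p.1 * bubble N s ε z p.1 - φ p.2 * bubble N s ε z p.2) ^ 2 -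
        (bubble N s ε z p.1 - bubble N s ε z p.2) ^ 2) / ‖p.1 - p.2‖ ^ b) ≤
      ∫ p in D, g p := by
    apply setIntegral_mono_on hfb hgD hDm
    intro p hp
    have hd : δ < ‖p.1 - p.2‖ := hp.2
    have hden : 0 < ‖p.1 - p.2‖ ^ b := Real.rpow_pos_of_pos (hδ0.trans hd) b
    have hnum : (φ p.1 * bubble N s ε z p.1 - φ p.2 * bubble N s ε z p.2) ^ 2 -
        (bubble N s ε z p.1 - bubble N s ε z p.2) ^ 2 ≤ c :=
      aux_num_le (hφ.mem01 p.1).1 (hφ.mem01 p.1).2 (hφ.mem01 p.2).1 (hφ.mem01 p.2).2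
        (hbub0 p.1) (hbub0 p.2) (hbubM p.1) (hbubM p.2)
    refine le_trans ((div_le_div_iff_of_pos_right hden).2 hnum) (le_of_eq ?_)
    have hd' : p.1 - p.2 ∈ {w : Rn N | δ < ‖w‖} := hd
    simp only [hg_def, hFδ_def]
    rw [Set.indicator_of_mem hd', Real.rpow_neg (norm_nonneg _), div_eq_mul_inv]
  -- step 2 : enlarge the domain
  have step2 : (∫ p in D, g p) ≤ ∫ p in S1 ∪ S2, g p :=
    setIntegral_mono_set hgU (Filter.Eventually.of_forall hg0) (hDsub.eventuallyLE)
  -- step 3 : split the union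
  have hIU : Integrable (Set.indicator (S1 ∪ S2) g) volume :=
    (integrable_indicator_iff (hS1m.union hS2m)).2 hgU
  have step3 : (∫ p in S1 ∪ S2, g p) ≤ (∫ p in S1, g p) + ∫ p in S2, g p := by
    rw [← integral_indicator (hS1m.union hS2m), ← integral_indicator hS1m,
      ← integral_indicator hS2m, ← integral_add hIS1' hIS2']
    apply integral_mono hIU (hIS1'.add hIS2')
    intro p
    by_cases h1 : p ∈ S1 <;> by_cases h2 : p ∈ S2 <;>
      simp [Set.indicator_apply, h1, h2, hg0 p]
  -- values of the integrals on S1 and S2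
  have hS1val : (∫ p in S1, g p) =
      (volume (Metric.closedBall (0 : Rn N) (4 * δ))).toReal * (c * ∫ w : Rn N, Fδ w) := by
    rw [← integral_indicator hS1m]
    exact hVS1
  have hS2val : (∫ p in S2, g p) =
      (volume (Metric.closedBall (0 : Rn N) (4 * δ))).toReal * (c * ∫ w : Rn N, Fδ w) := by
    rw [← integral_indicator hS2m, hVS2, ← hS1val, integral_indicator hS1m]
  have hVB : (volume (Metric.closedBall (0 : Rn N) (4 * δ))).toReal = (4 * δ) ^ N * V := by
    rw [Measure.addHaar_closedBall _ _ (by positivity : (0:ℝ) ≤ 4 * δ), ENNReal.toReal_mul,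
      ENNReal.toReal_ofReal (by positivity), finrank_euclideanSpace_fin, hV_def]
  have hFval : (∫ w : Rn N, Fδ w) = δ ^ ((N : ℝ) - b) * K := by
    rw [hFδ_def, aux_indicator_integral N hδ0, hK_def]
  -- final arithmetic
  have hpow : (0:ℝ) < (δ / ε) ^ a := Real.rpow_pos_of_pos (div_pos hδ0 hε0) a
  have final : 2 * ((4 * δ) ^ N * V * (c * (δ ^ ((N : ℝ) - b) * K)))
      ≤ (4 * 4 ^ N * V * K + 1) * (δ / ε) ^ a := by
    have h1 : δ ^ ((N : ℝ)) * δ ^ ((N : ℝ) - b) = δ ^ a := by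
      rw [← Real.rpow_add hδ0]
      congr 1
      rw [ha_def, hb_def]
      ring
    have h2 : δ ^ a * ε ^ (-a) = (δ / ε) ^ a := by
      rw [Real.rpow_neg hε0.le, Real.div_rpow hδ0.le hε0.le, div_eq_mul_inv]
    calc 2 * ((4 * δ) ^ N * V * (c * (δ ^ ((N : ℝ) - b) * K)))
        = 4 * 4 ^ N * V * K * (δ ^ ((N : ℝ)) * δ ^ ((N : ℝ) - b) * ε ^ (-a)) := by
          rw [hc_def, hmm, mul_pow, Real.rpow_natCast]
          ring
      _ = 4 * 4 ^ N * V * K * (δ ^ a * ε ^ (-a)) := by rw [h1]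
      _ = 4 * 4 ^ N * V * K * (δ / ε) ^ a := by rw [h2]
      _ ≤ (4 * 4 ^ N * V * K + 1) * (δ / ε) ^ a := by
          apply mul_le_mul_of_nonneg_right (by linarith) hpow.le
  calc (∫ p in D,
      ((φ p.1 * bubble N s ε z p.1 - φ p.2 * bubble N s ε z p.2) ^ 2 -
        (bubble N s ε z p.1 - bubble N s ε z p.2) ^ 2) / ‖p.1 - p.2‖ ^ b)
      ≤ ∫ p in D, g p := step1
    _ ≤ ∫ p in S1 ∪ S2, g p := step2
    _ ≤ (∫ p in S1, g p) + ∫ p in S2, g p := step3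
    _ = 2 * ((4 * δ) ^ N * V * (c * (δ ^ ((N : ℝ) - b) * K))) := by
        rw [hS1val, hS2val, hVB, hFval]
        ring
    _ ≤ (4 * 4 ^ N * V * K + 1) * (δ / ε) ^ a := final
end

section
/- Let Ω ⊂ ℝ^N be a bounded open set and let u ∈ X₀ be a sign-changing weak solution, i.e. ⟨u,φ⟩ = ∫_Ω |u|^{4s/(N−2s)} u φ dx for every φ ∈ X₀, with u⁺ ≠ 0 and u⁻ ≠ 0 (as elements of L^{2N/(N−2s)}). Then ∫_Ω |u⁺|^{2N/(N−2s)} dx ≥ S^{N/(2s)} and ∫_Ω |u⁻|^{2N/(N−2s)} dx ≥ S^{N/(2s)}. -/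
open MeasureTheory Filter Set

private lemma max_sub_sq_le (a c : ℝ) :
    (max a 0 - max c 0) * (max a 0 - max c 0) ≤ (a - c) * (max a 0 - max c 0) := by
  rcases le_total a 0 with ha | ha <;> rcases le_total c 0 with hc | hc
  · rw [max_eq_right ha, max_eq_right hc]; simp
  · rw [max_eq_right ha, max_eq_left hc]; nlinarith
  · rw [max_eq_left ha, max_eq_right hc]; nlinarith
  · rw [max_eq_left ha, max_eq_left hc]

private lemma maxneg (a : ℝ) : max (-a) 0 = -min a 0 := by
  rcases le_total a 0 with h | h
  · rw [max_eq_left (neg_nonneg.mpr h), min_eq_left h]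
  · rw [max_eq_right (neg_nonpos.mpr h), min_eq_right h, neg_zero]

private lemma asm_cross {N : ℕ} {w w' : Rn N → ℝ}
    (hw : AEStronglyMeasurable w (volume : Measure (Rn N)))
    (hw' : AEStronglyMeasurable w' (volume : Measure (Rn N))) {α : ℝ} (hα : 0 ≤ α) :
    AEStronglyMeasurable
      (fun q : Rn N × Rn N => (w q.1 - w q.2) * (w' q.1 - w' q.2) / ‖q.1 - q.2‖ ^ α) volume := by
  rw [MeasureTheory.Measure.volume_eq_prod]
  exact (((hw.comp_fst.aemeasurable.sub hw.comp_snd.aemeasurable).mul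
      (hw'.comp_fst.aemeasurable.sub hw'.comp_snd.aemeasurable)).div
    ((continuous_fst.sub continuous_snd).norm.rpow_const
      (fun x => Or.inr hα)).measurable.aemeasurable).aestronglyMeasurable

private lemma sconst_nonneg_mem (N : ℕ) (s : ℝ) :
    ∀ r ∈ { r : ℝ | ∃ u : Rn N → ℝ, MemHs N s u ∧ ¬ u =ᵐ[volume] (fun _ => (0 : ℝ)) ∧
      r = gagNormSq N s u /
        (∫ x : Rn N, |u x| ^ (2 * (N : ℝ) / ((N : ℝ) - 2 * s))) ^ (((N : ℝ) - 2 * s) / (N : ℝ)) },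
      0 ≤ r := by
  rintro r ⟨w, hw, hwne, rfl⟩
  apply div_nonneg
  · exact integral_nonneg fun q =>
      div_nonneg (mul_self_nonneg _) (Real.rpow_nonneg (norm_nonneg _) _)
  · exact Real.rpow_nonneg
      (integral_nonneg fun x => Real.rpow_nonneg (abs_nonneg _) _) _

private lemma key (N : ℕ) (s : ℝ) (hN : 2 ≤ N) (hs0 : 0 < s) (hNs : 2 * s < N)
    (Ω : Set (Rn N)) (hΩo : IsOpen Ω)
    (u : Rn N → ℝ) (hu : MemX0 N s Ω u)
    (hsol : ∀ φ : Rn N → ℝ, MemX0 N s Ω φ →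
      gagInner N s u φ = ∫ x in Ω, |u x| ^ (4 * s / ((N : ℝ) - 2 * s)) * u x * φ x)
    (hup : ¬ (fun x => max (u x) 0) =ᵐ[volume] (fun _ => (0 : ℝ))) :
    Sconst N s ^ ((N : ℝ) / (2 * s)) ≤
      ∫ x in Ω, |max (u x) 0| ^ (2 * (N : ℝ) / ((N : ℝ) - 2 * s)) := by
  have hden : (0:ℝ) < (N : ℝ) - 2 * s := by linarith
  have hNpos : (0:ℝ) < (N : ℝ) := by linarith
  set p : ℝ := 2 * (N : ℝ) / ((N : ℝ) - 2 * s) with hpdef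
  set θ : ℝ := ((N : ℝ) - 2 * s) / (N : ℝ) with hθdef
  have hppos : 0 < p := div_pos (by linarith) hden
  have hα : (0:ℝ) ≤ (N : ℝ) + 2 * s := by linarith
  set v : Rn N → ℝ := fun x => max (u x) 0 with hvdef
  have humeas : AEStronglyMeasurable u (volume : Measure (Rn N)) :=
    hu.1.1.aestronglyMeasurable
  have hvmeas : AEStronglyMeasurable v (volume : Measure (Rn N)) :=
    (continuous_id.max continuous_const).comp_aestronglyMeasurable humeas
  -- abs diff bound
  have habs : ∀ q : Rn N × Rn N, |v q.1 - v q.2| ≤ |u q.1 - u q.2| := fun q =>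
    abs_max_sub_max_le_abs (u q.1) (u q.2) 0
  -- integrability of the Gagliardo integrand for v
  have hv_int2 : Integrable (fun q : Rn N × Rn N =>
      (v q.1 - v q.2) ^ 2 / ‖q.1 - q.2‖ ^ ((N : ℝ) + 2 * s)) volume := by
    refine hu.1.2.mono ?_ (Filter.Eventually.of_forall fun q => ?_)
    · have := asm_cross hvmeas hvmeas hα
      simpa [pow_two] using this
    · simp only [Real.norm_eq_abs, abs_div, abs_of_nonneg (Real.rpow_nonneg (norm_nonneg _) _)]
      refine div_le_div_nonneg' ?_ (Real.rpow_nonneg (norm_nonneg _) _)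
      rw [abs_pow, abs_pow, pow_two, pow_two]
      exact mul_le_mul (habs q) (habs q) (abs_nonneg _) (abs_nonneg _)
  have hvmemHs : MemHs N s v := ⟨hu.1.1.pos_part, hv_int2⟩
  have hvzero : ∀ᵐ x : Rn N, x ∉ Ω → v x = 0 := by
    filter_upwards [hu.2] with x hx hxΩ
    simp [hvdef, hx hxΩ]
  have hvX0 : MemX0 N s Ω v := ⟨hvmemHs, hvzero⟩
  -- integrability of |v|^p
  have hint : Integrable (fun x => |v x| ^ p) (volume : Measure (Rn N)) := by
    have h1 := hvmemHs.1.integrable_norm_rpow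
      (by simp [ENNReal.ofReal_eq_zero]; positivity) (by simp)
    rw [ENNReal.toReal_ofReal hppos.le] at h1
    simpa [Real.norm_eq_abs] using h1
  -- full integral equals integral over Ω
  have hcompl : ∫ x in Ωᶜ, |v x| ^ p = 0 := by
    rw [setIntegral_congr_ae hΩo.measurableSet.compl
      (g := fun _ => (0:ℝ)) ?_, integral_zero]
    filter_upwards [hvzero] with x hx hxc
    rw [hx hxc]
    simp [Real.zero_rpow hppos.ne']
  have hfull : ∫ x : Rn N, |v x| ^ p = ∫ x in Ω, |v x| ^ p := by
    rw [← integral_add_compl hΩo.measurableSet hint, hcompl, add_zero]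
  set D : ℝ := ∫ x in Ω, |v x| ^ p with hDdef
  have hD0 : 0 ≤ D := integral_nonneg fun x => Real.rpow_nonneg (abs_nonneg _) _
  have hDpos : 0 < D := by
    rcases hD0.eq_or_lt with h0 | h0
    · exfalso
      apply hup
      have hz : ∫ x : Rn N, |v x| ^ p = 0 := by rw [hfull, ← h0]
      have := (integral_eq_zero_iff_of_nonneg
        (fun x => Real.rpow_nonneg (abs_nonneg _) _) hint).mp hz
      filter_upwards [this] with x hx
      have : |v x| = 0 := by
        by_contra hne
        exact hne (((Real.rpow_eq_zero_iff_of_nonneg (abs_nonneg _)).mp hx).1)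
      simpa [hvdef] using abs_eq_zero.mp this
    · exact h0
  -- Sobolev constant bound
  have hSle : Sconst N s ≤ gagNormSq N s v / D ^ θ := by
    have hmem : gagNormSq N s v / (∫ x : Rn N, |v x| ^ p) ^ θ ∈
        { r : ℝ | ∃ w : Rn N → ℝ, MemHs N s w ∧ ¬ w =ᵐ[volume] (fun _ => (0 : ℝ)) ∧
          r = gagNormSq N s w /
            (∫ x : Rn N, |w x| ^ (2 * (N : ℝ) / ((N : ℝ) - 2 * s))) ^
              (((N : ℝ) - 2 * s) / (N : ℝ)) } := ⟨v, hvmemHs, hup, rfl⟩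
    have := csInf_le ⟨0, fun r hr => sconst_nonneg_mem N s r hr⟩ hmem
    rwa [hfull] at this
  have hS0 : 0 ≤ Sconst N s := Real.sInf_nonneg (sconst_nonneg_mem N s)
  -- norm comparison
  have hA0 : 0 ≤ gagNormSq N s v := integral_nonneg fun q =>
    div_nonneg (mul_self_nonneg _) (Real.rpow_nonneg (norm_nonneg _) _)
  have hinner : gagNormSq N s v ≤ gagInner N s u v := by
    unfold gagNormSq gagInner
    refine integral_mono ?_ ?_ ?_
    · simpa [pow_two] using hv_int2
    · refine hu.1.2.mono (asm_cross humeas hvmeas hα)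
        (Filter.Eventually.of_forall fun q => ?_)
      simp only [Real.norm_eq_abs, abs_div, abs_of_nonneg (Real.rpow_nonneg (norm_nonneg _) _)]
      refine div_le_div_nonneg' ?_ (Real.rpow_nonneg (norm_nonneg _) _)
      rw [abs_mul, abs_pow, pow_two]
      exact mul_le_mul_of_nonneg_left (habs q) (abs_nonneg _)
    · intro q
      exact div_le_div_nonneg' (max_sub_sq_le (u q.1) (u q.2))
        (Real.rpow_nonneg (norm_nonneg _) _)
  -- the solution identity
  have hpt : ∀ x, |u x| ^ (4 * s / ((N : ℝ) - 2 * s)) * u x * v x = |v x| ^ p := by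
    intro x
    rcases le_or_gt (u x) 0 with h | h
    · have hv0 : v x = 0 := max_eq_right h
      rw [hv0, mul_zero, abs_zero, Real.zero_rpow hppos.ne']
    · have hvx : v x = u x := max_eq_left h.le
      have hsum : 4 * s / ((N : ℝ) - 2 * s) + 2 = p := by
        rw [hpdef, div_add' _ _ _ hden.ne']; congr 1; ring
      have h2 : (u x) ^ (2:ℝ) = u x * u x := by
        rw [show (2:ℝ) = ((2:ℕ):ℝ) by norm_num, Real.rpow_natCast]; ring
      rw [hvx, abs_of_pos h, ← hsum, Real.rpow_add h, h2]
      ring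
  have hEqInt : ∫ x in Ω, |u x| ^ (4 * s / ((N : ℝ) - 2 * s)) * u x * v x = D := by
    rw [hDdef]
    exact integral_congr_ae (Filter.Eventually.of_forall fun x => hpt x)
  have hAD : gagNormSq N s v ≤ D := by
    calc gagNormSq N s v ≤ gagInner N s u v := hinner
      _ = _ := hsol v hvX0
      _ = D := hEqInt
  -- combine
  have hDθpos : 0 < D ^ θ := Real.rpow_pos_of_pos hDpos θ
  have hstep : Sconst N s ≤ D ^ (2 * s / (N : ℝ)) := by
    have h1 : Sconst N s * D ^ θ ≤ D := by
      calc Sconst N s * D ^ θ ≤ gagNormSq N s v := (le_div_iff₀ hDθpos).mp hSle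
        _ ≤ D := hAD
    have h2 : Sconst N s ≤ D / D ^ θ := (le_div_iff₀ hDθpos).mpr h1
    have h3 : D / D ^ θ = D ^ (1 - θ) := by
      rw [Real.rpow_sub hDpos, Real.rpow_one]
    have h4 : 1 - θ = 2 * s / (N : ℝ) := by
      rw [hθdef]; field_simp; ring
    rwa [h3, h4] at h2
  calc Sconst N s ^ ((N : ℝ) / (2 * s)) ≤
      (D ^ (2 * s / (N : ℝ))) ^ ((N : ℝ) / (2 * s)) :=
        Real.rpow_le_rpow hS0 hstep (by positivity)
    _ = D := by
        rw [← Real.rpow_mul hD0,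
          show 2 * s / (N : ℝ) * ((N : ℝ) / (2 * s)) = 1 by
            field_simp, Real.rpow_one]

/-- for a sign-changing weak solution `u ∈ X₀`, both
`∫_Ω |u⁺|^{2N/(N-2s)}` and `∫_Ω |u⁻|^{2N/(N-2s)}` are at least `S^{N/(2s)}`. -/
theorem stmt17 (N : ℕ) (s : ℝ) (hN : 2 ≤ N) (hs0 : 0 < s) (hs1 : s < 1)
    (hNs : 2 * s < N)
    (Ω : Set (Rn N)) (hΩo : IsOpen Ω) (hΩb : Bornology.IsBounded Ω)
    (u : Rn N → ℝ) (hu : MemX0 N s Ω u)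
    (hsol : ∀ φ : Rn N → ℝ, MemX0 N s Ω φ →
      gagInner N s u φ = ∫ x in Ω, |u x| ^ (4 * s / ((N : ℝ) - 2 * s)) * u x * φ x)
    (hup : ¬ (fun x => max (u x) 0) =ᵐ[volume] (fun _ => (0 : ℝ)))
    (hum : ¬ (fun x => -min (u x) 0) =ᵐ[volume] (fun _ => (0 : ℝ))) :
    Sconst N s ^ ((N : ℝ) / (2 * s)) ≤
        ∫ x in Ω, |max (u x) 0| ^ (2 * (N : ℝ) / ((N : ℝ) - 2 * s)) ∧
      Sconst N s ^ ((N : ℝ) / (2 * s)) ≤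
        ∫ x in Ω, |(-min (u x) 0)| ^ (2 * (N : ℝ) / ((N : ℝ) - 2 * s)) := by
  constructor
  · exact key N s hN hs0 hNs Ω hΩo u hu hsol hup
  · have hwmem : MemX0 N s Ω (fun x => -u x) := by
      refine ⟨⟨hu.1.1.neg, ?_⟩, ?_⟩
      · have heq : (fun q : Rn N × Rn N =>
            ((fun x => -u x) q.1 - (fun x => -u x) q.2) ^ 2 / ‖q.1 - q.2‖ ^ ((N : ℝ) + 2 * s)) =
            (fun q : Rn N × Rn N =>
            (u q.1 - u q.2) ^ 2 / ‖q.1 - q.2‖ ^ ((N : ℝ) + 2 * s)) := by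
          funext q; dsimp only; congr 1; ring
        rw [heq]; exact hu.1.2
      · filter_upwards [hu.2] with x hx hxΩ
        simp [hx hxΩ]
    have hwsol : ∀ φ : Rn N → ℝ, MemX0 N s Ω φ →
        gagInner N s (fun x => -u x) φ =
          ∫ x in Ω, |(fun x => -u x) x| ^ (4 * s / ((N : ℝ) - 2 * s)) * (fun x => -u x) x * φ x := by
      intro φ hφ
      have hL : gagInner N s (fun x => -u x) φ = - gagInner N s u φ := by
        unfold gagInner
        rw [← integral_neg]
        congr 1; funext q; dsimp only; ring
      have hR : (∫ x in Ω, |(fun x => -u x) x| ^ (4 * s / ((N : ℝ) - 2 * s)) *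
            (fun x => -u x) x * φ x) =
          - ∫ x in Ω, |u x| ^ (4 * s / ((N : ℝ) - 2 * s)) * u x * φ x := by
        rw [← integral_neg]
        refine integral_congr_ae (Filter.Eventually.of_forall fun x => ?_)
        dsimp only; rw [abs_neg]; ring
      rw [hL, hR, hsol φ hφ]
    have hfun : (fun x => max (-u x) 0) = (fun x => -min (u x) 0) :=
      funext fun x => maxneg (u x)
    have hupw : ¬ (fun x => max ((fun x => -u x) x) 0) =ᵐ[volume] (fun _ => (0 : ℝ)) := by
      dsimp only
      rw [hfun]; exact hum
    have h2 := key N s hN hs0 hNs Ω hΩo (fun x => -u x) hwmem hwsol hupw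
    simp only [maxneg] at h2
    exact h2
end
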